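/- arXiv:1502.04597 — 4 statements merged into one kernel-verified Lean document; each statement's English description precedes it below -/
import Mathlib

section
/- Let q ∈ ℂ with |q| > 1. For every z ∈ ℂ*, the Jacobi triple product identity holds: Σ_{n∈ℤ} q^{-n(n+1)/2} z^n = ∏_{n=0}^∞ (1 − q^{-n-1})(1 + q^{-n-1} z)(1 + q^{-n} z^{-1}), where the infinite product converges. -/
/-- The Jacobi theta function `Θ_q(z) = Σ_{n ∈ ℤ} q^{-n(n+1)/2} z^n`. -/
noncomputable def theta (q z : ℂ) : ℂ := ∑' n : ℤ, q ^ (-(n * (n + 1)) / 2) * z ^ n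

open Finset Filter Topology

namespace JTP

noncomputable def B (w : ℂ) : ℕ → ℕ → ℂ
  | 0, 0 => 1
  | 0, _+1 => 0
  | _+1, 0 => 1
  | m+1, k+1 => B w m (k+1) + w ^ (m - k) * B w m k

noncomputable def F (w : ℂ) (m : ℕ) : ℂ := ∏ j ∈ Finset.range m, (1 - w ^ (j+1))

def T (k : ℕ) : ℕ := k * (k + 1) / 2

def e (n : ℤ) : ℤ := n * (n + 1) / 2

noncomputable def a (w z : ℂ) (j : ℕ) : ℂ :=
  (1 - w ^ (j+1)) * (1 + w ^ (j+1) * z) * (1 + w ^ j * z⁻¹)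

noncomputable def g (w : ℂ) (N : ℕ) (n : ℤ) : ℂ :=
  if -(N:ℤ) ≤ n ∧ n ≤ N then F w N * B w (2*N) ((n + N).toNat) else 0

lemma T_succ (k : ℕ) : T (k+1) = T k + (k+1) := by
  have h1 : Even (k * (k+1)) := Nat.even_mul_succ_self k
  obtain ⟨c, hc⟩ := h1
  have h2 : (k+1) * (k+1+1) = k * (k+1) + 2*(k+1) := by ring
  unfold T; omega

lemma T_mul_two (k : ℕ) : T k * 2 = k * (k + 1) := by
  obtain ⟨c, hc⟩ := Nat.even_mul_succ_self k
  unfold T; omega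

lemma e_mul_two (n : ℤ) : e n * 2 = n * (n + 1) := by
  obtain ⟨c, hc⟩ := Int.even_mul_succ_self n
  unfold e; omega

lemma e_succ (n : ℤ) : e (n + 1) = e n + (n + 1) := by
  obtain ⟨c, hc⟩ := Int.even_mul_succ_self n
  obtain ⟨d, hd⟩ := Int.even_mul_succ_self (n+1)
  have h2 : (n+1) * (n+1+1) = n * (n+1) + 2*(n+1) := by ring
  unfold e; omega

variable {w z : ℂ}

lemma B_zero (m : ℕ) : B w m 0 = 1 := by cases m <;> rfl

lemma B_of_lt : ∀ {m k : ℕ}, m < k → B w m k = 0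
  | 0, k+1, _ => rfl
  | m+1, k+1, h => by
      rw [B, B_of_lt (by omega), B_of_lt (by omega)]; ring

lemma B_diag : ∀ m : ℕ, B w m m = 1
  | 0 => rfl
  | m+1 => by rw [B, B_of_lt (by omega), B_diag m]; simp

lemma F_zero : F w 0 = 1 := by simp [F]

lemma F_succ (j : ℕ) : F w (j+1) = F w j * (1 - w ^ (j+1)) := prod_range_succ _ _

lemma gauss_binom (x : ℂ) (m : ℕ) :
    ∏ j ∈ range m, (1 + x * w ^ (j+1)) =
      ∑ k ∈ range (m+1), B w m k * w ^ T k * x ^ k := by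
  induction m with
  | zero => simp [B, T]
  | succ m ih =>
      have key : ∀ k ∈ range (m+1),
          B w (m+1) (k+1) * w ^ T (k+1) * x ^ (k+1)
            = B w m (k+1) * w ^ T (k+1) * x ^ (k+1)
              + (B w m k * w ^ T k * x ^ k) * (x * w ^ (m+1)) := by
        intro k hk
        rw [mem_range] at hk
        rw [B]
        have h1 : T (k+1) + (m - k) = T k + (m+1) := by rw [T_succ]; omega
        have h2 : w ^ T (k+1) * w ^ (m-k) = w ^ T k * w ^ (m+1) := by
          rw [← pow_add, ← pow_add, h1]
        linear_combination (B w m k * x ^ (k+1)) * h2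
      rw [prod_range_succ, ih, sum_range_succ' _ (m+1), sum_congr rfl key,
        sum_add_distrib, ← sum_mul]
      have A := sum_range_succ' (fun k => B w m k * w ^ T k * x ^ k) (m+1)
      have Bt := sum_range_succ (fun k => B w m k * w ^ T k * x ^ k) (m+1)
      have hf0 : B w m 0 * w ^ T 0 * x ^ 0 = 1 := by simp [B_zero, T]
      have hfm : B w m (m+1) * w ^ T (m+1) * x ^ (m+1) = 0 := by
        rw [B_of_lt (by omega)]; ring
      have hs0 : B w (m+1) 0 * w ^ T 0 * x ^ 0 = 1 := by simp [B_zero, T]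
      linear_combination A - Bt + hf0 - hfm - hs0

lemma B_mul_F : ∀ m : ℕ, ∀ k ≤ m, B w m k * (F w k * F w (m - k)) = F w m := by
  intro m
  induction m with
  | zero => intro k hk; interval_cases k; simp [B, F_zero]
  | succ m ih =>
      intro k hk
      match k with
      | 0 => simp [B_zero, F_zero]
      | k+1 =>
        rcases eq_or_lt_of_le hk with h | h
        · obtain rfl : k = m := by omega
          simp only [B_diag, Nat.sub_self, F_zero, one_mul, mul_one]
        · have hkm : k + 1 ≤ m := by omega
          have IH1 := ih (k+1) hkm
          have IH2 := ih k (by omega)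
          have h3 : m + 1 - (k+1) = (m - (k+1)) + 1 := by omega
          have h4 : m - k = (m - (k+1)) + 1 := by omega
          rw [h3, B, F_succ (m - (k+1)), F_succ k, F_succ m]
          rw [h4] at IH2 ⊢
          rw [F_succ (m - (k+1))] at IH2
          have hpow : w ^ (m - (k+1) + 1) * w ^ (k+1) = w ^ (m+1) := by
            rw [← pow_add]; congr 1; omega
          rw [F_succ k] at IH1
          linear_combination (1 - w ^ (m - (k+1) + 1)) * IH1
            + w ^ (m - (k+1) + 1) * (1 - w ^ (k+1)) * IH2
            - F w m * hpow

section bounds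
variable (hr : ‖w‖ < 1)
include hr

lemma sum_pow_le (m : ℕ) : ∑ j ∈ range m, ‖w‖ ^ (j+1) ≤ ‖w‖ / (1 - ‖w‖) := by
  have h0 : (0:ℝ) ≤ ‖w‖ := norm_nonneg w
  have h1 : ∑ j ∈ range m, ‖w‖ ^ (j+1) = ‖w‖ * ∑ j ∈ range m, ‖w‖ ^ j := by
    rw [mul_sum]; exact sum_congr rfl fun j _ => by rw [pow_succ]; ring
  rw [h1, div_eq_mul_inv]
  have hg : ∑ j ∈ range m, ‖w‖ ^ j ≤ (1 - ‖w‖)⁻¹ := by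
    calc ∑ j ∈ range m, ‖w‖ ^ j ≤ ∑' j : ℕ, ‖w‖ ^ j :=
          Summable.sum_le_tsum (range m) (fun _ _ => by positivity)
            (summable_geometric_of_lt_one h0 hr)
      _ = (1 - ‖w‖)⁻¹ := tsum_geometric_of_lt_one h0 hr
  exact mul_le_mul_of_nonneg_left hg h0

lemma norm_F_le (m : ℕ) : ‖F w m‖ ≤ Real.exp (‖w‖ / (1 - ‖w‖)) := by
  have h0 : (0:ℝ) ≤ ‖w‖ := norm_nonneg w
  calc ‖F w m‖ ≤ ∏ j ∈ range m, ‖(1 : ℂ) - w ^ (j+1)‖ := norm_prod_le _ _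
    _ ≤ ∏ j ∈ range m, Real.exp (‖w‖ ^ (j+1)) := by
        apply prod_le_prod (fun j _ => norm_nonneg _)
        intro j _
        calc ‖(1:ℂ) - w ^ (j+1)‖ ≤ ‖(1:ℂ)‖ + ‖w ^ (j+1)‖ := norm_sub_le _ _
          _ = 1 + ‖w‖ ^ (j+1) := by rw [norm_one, norm_pow]
          _ ≤ Real.exp (‖w‖ ^ (j+1)) := by
              rw [add_comm]; exact Real.add_one_le_exp _
    _ = Real.exp (∑ j ∈ range m, ‖w‖ ^ (j+1)) := by rw [Real.exp_sum]
    _ ≤ _ := Real.exp_le_exp.2 (sum_pow_le hr m)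

lemma exp_le_one_sub {x : ℝ} (hx : 0 ≤ x) (hxr : x ≤ ‖w‖) :
    Real.exp (-(x / (1 - ‖w‖))) ≤ 1 - x := by
  have hr1 : 0 < 1 - ‖w‖ := by linarith
  have hx1 : 0 < 1 - x := by linarith
  have h1 : x / (1 - x) ≤ x / (1 - ‖w‖) :=
    div_le_div_of_nonneg_left hx hr1 (by linarith) |>.trans_eq rfl
  have h2 : (1 - x)⁻¹ ≤ Real.exp (x / (1 - x)) := by
    have := Real.add_one_le_exp (x / (1 - x))
    have he : x / (1 - x) + 1 = (1 - x)⁻¹ := by field_simp; ring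
    linarith [he ▸ this]
  calc Real.exp (-(x / (1 - ‖w‖))) ≤ Real.exp (-(x / (1 - x))) :=
        Real.exp_le_exp.2 (by linarith)
    _ = (Real.exp (x / (1 - x)))⁻¹ := by rw [Real.exp_neg]
    _ ≤ ((1 - x)⁻¹)⁻¹ := by
        apply inv_anti₀ (by positivity) h2
    _ = 1 - x := inv_inv _

lemma norm_F_ge (m : ℕ) : Real.exp (-(‖w‖ / (1 - ‖w‖)^2)) ≤ ‖F w m‖ := by
  have h0 : (0:ℝ) ≤ ‖w‖ := norm_nonneg w
  have hr1 : 0 < 1 - ‖w‖ := by linarith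
  have key : ∀ j ∈ range m, Real.exp (-(‖w‖^(j+1) / (1 - ‖w‖))) ≤ ‖(1:ℂ) - w ^ (j+1)‖ := by
    intro j _
    have hx : ‖w‖ ^ (j+1) ≤ ‖w‖ := pow_le_of_le_one h0 hr.le (by omega)
    calc Real.exp (-(‖w‖^(j+1) / (1 - ‖w‖))) ≤ 1 - ‖w‖ ^ (j+1) :=
          exp_le_one_sub hr (by positivity) hx
      _ = ‖(1:ℂ)‖ - ‖w ^ (j+1)‖ := by rw [norm_one, norm_pow]
      _ ≤ ‖(1:ℂ) - w ^ (j+1)‖ := norm_sub_norm_le _ _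
  calc Real.exp (-(‖w‖ / (1 - ‖w‖)^2))
      ≤ Real.exp (-(∑ j ∈ range m, ‖w‖^(j+1)) / (1 - ‖w‖)) := by
        apply Real.exp_le_exp.2
        rw [neg_div]
        apply neg_le_neg
        rw [div_le_div_iff₀ hr1 (by positivity)]
        calc (∑ j ∈ range m, ‖w‖^(j+1)) * (1 - ‖w‖)^2
            ≤ (‖w‖ / (1 - ‖w‖)) * (1 - ‖w‖)^2 := by
              apply mul_le_mul_of_nonneg_right (sum_pow_le hr m) (by positivity)
          _ = ‖w‖ * (1 - ‖w‖) := by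
              have hne : (1:ℝ) - ‖w‖ ≠ 0 := ne_of_gt hr1
              rw [div_mul_eq_mul_div, sq, mul_div_assoc, mul_div_cancel_left₀ _ hne]
    _ = ∏ j ∈ range m, Real.exp (-(‖w‖^(j+1) / (1 - ‖w‖))) := by
        rw [← Real.exp_sum]
        congr 1
        simp [neg_div, Finset.sum_div, Finset.sum_neg_distrib]
    _ ≤ ∏ j ∈ range m, ‖(1:ℂ) - w ^ (j+1)‖ :=
        prod_le_prod (fun j _ => (Real.exp_pos _).le) key
    _ = ‖F w m‖ := (norm_prod _ _).symm

lemma F_ne_zero (m : ℕ) : F w m ≠ 0 := by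
  have := norm_F_ge hr m
  intro h
  rw [h, norm_zero] at this
  exact absurd this (not_le.2 (Real.exp_pos _))

lemma norm_F_inv_le (m : ℕ) : ‖F w m‖⁻¹ ≤ Real.exp (‖w‖ / (1 - ‖w‖)^2) := by
  have h1 := norm_F_ge hr m
  have h2 : (0:ℝ) < Real.exp (-(‖w‖ / (1 - ‖w‖)^2)) := Real.exp_pos _
  calc ‖F w m‖⁻¹ ≤ (Real.exp (-(‖w‖ / (1 - ‖w‖)^2)))⁻¹ := inv_anti₀ h2 h1
    _ = Real.exp (‖w‖ / (1 - ‖w‖)^2) := by rw [← Real.exp_neg, neg_neg]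

lemma norm_B_le {m k : ℕ} (hk : k ≤ m) :
    ‖B w m k‖ ≤ Real.exp (‖w‖/(1-‖w‖)) * Real.exp (‖w‖/(1-‖w‖)^2)^2 := by
  have hBF := B_mul_F (w := w) m k hk
  have hFk := F_ne_zero hr k
  have hFmk := F_ne_zero hr (m - k)
  have hB : B w m k = F w m * (F w k)⁻¹ * (F w (m-k))⁻¹ := by
    field_simp
    linear_combination hBF
  rw [hB]
  rw [norm_mul, norm_mul, norm_inv, norm_inv]
  have h1 := norm_F_le hr m
  have h2 := norm_F_inv_le hr k
  have h3 := norm_F_inv_le hr (m-k)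
  have hn1 : (0:ℝ) ≤ ‖F w m‖ := norm_nonneg _
  have hn2 : (0:ℝ) ≤ ‖F w k‖⁻¹ := by positivity
  have hn3 : (0:ℝ) ≤ ‖F w (m-k)‖⁻¹ := by positivity
  calc ‖F w m‖ * ‖F w k‖⁻¹ * ‖F w (m-k)‖⁻¹
      ≤ Real.exp (‖w‖/(1-‖w‖)) * Real.exp (‖w‖/(1-‖w‖)^2) * Real.exp (‖w‖/(1-‖w‖)^2) := by
        apply mul_le_mul (mul_le_mul h1 h2 hn2 (Real.exp_pos _).le) h3 hn3
        positivity
    _ = _ := by ring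

lemma norm_g_le (N : ℕ) (n : ℤ) :
    ‖g w N n‖ ≤ Real.exp (‖w‖/(1-‖w‖))^2 * Real.exp (‖w‖/(1-‖w‖)^2)^2 := by
  rw [g]
  split_ifs with h
  · rw [norm_mul]
    have hk : (n + N).toNat ≤ 2*N := by omega
    calc ‖F w N‖ * ‖B w (2*N) ((n + N).toNat)‖
        ≤ Real.exp (‖w‖/(1-‖w‖)) * (Real.exp (‖w‖/(1-‖w‖)) * Real.exp (‖w‖/(1-‖w‖)^2)^2) :=
          mul_le_mul (norm_F_le hr N) (norm_B_le hr hk) (norm_nonneg _) (Real.exp_pos _).le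
      _ = _ := by ring
  · rw [norm_zero]; positivity

end bounds

lemma prod_a (hw : w ≠ 0) (hz : z ≠ 0) (N : ℕ) :
    ∏ j ∈ range N, a w z j
      = ∑ k ∈ range (2*N+1), F w N * B w (2*N) k * w ^ e ((k:ℤ) - N) * z ^ ((k:ℤ) - N) := by
  have hsplit : ∏ j ∈ range N, a w z j
      = F w N * ((∏ j ∈ range N, (1 + w ^ (j+1) * z)) * ∏ j ∈ range N, (1 + w ^ j * z⁻¹)) := by
    have h : ∀ j ∈ range N, a w z j
        = (1 - w ^ (j+1)) * ((1 + w ^ (j+1) * z) * (1 + w ^ j * z⁻¹)) := by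
      intro j _; rw [a]; ring
    rw [prod_congr rfl h, prod_mul_distrib, prod_mul_distrib, F]
  set x : ℂ := z * (w ^ N)⁻¹ with hx
  have hxg := gauss_binom (w := w) x (2*N)
  have h2N : 2*N = N + N := by ring
  rw [h2N, prod_range_add] at hxg
  have hQ : ∀ j ∈ range N, (1 + x * w ^ (N + j + 1)) = 1 + w ^ (j+1) * z := by
    intro j _
    have : x * w ^ (N + j + 1) = w ^ (j+1) * z := by
      rw [hx]
      have : w ^ (N + j + 1) = w ^ N * w ^ (j+1) := by rw [← pow_add]; ring_nf
      rw [this]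
      field_simp
    rw [this]
  have hR : ∀ j ∈ range N, (1 + x * w ^ (N - 1 - j + 1))
      = (1 + w ^ j * z⁻¹) * (z * (w ^ j)⁻¹) := by
    intro j hj
    rw [mem_range] at hj
    have h1 : x * w ^ (N - 1 - j + 1) = z * (w ^ j)⁻¹ := by
      rw [hx]
      have h2 : w ^ (N - 1 - j + 1) * w ^ j = w ^ N := by
        rw [← pow_add]; congr 1; omega
      field_simp
      linear_combination h2
    rw [h1]
    field_simp
    ring
  have hrefl := prod_range_reflect (fun j => (1 + x * w ^ (j + 1))) N
  rw [← hrefl, prod_congr rfl hR, prod_mul_distrib, prod_congr rfl hQ] at hxg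
  rw [prod_mul_distrib, prod_const, card_range, prod_inv_distrib, prod_pow_eq_pow_sum] at hxg
  set c : ℕ := ∑ j ∈ range N, j with hc
  have hcc : c * 2 = N * (N - 1) := by
    rw [hc, Finset.sum_range_id_mul_two]
  rw [hsplit]
  have hQR : (∏ j ∈ range N, (1 + w ^ (j+1) * z)) * ∏ j ∈ range N, (1 + w ^ j * z⁻¹)
      = ∑ k ∈ range (N+N+1), B w (N+N) k * w ^ T k * x ^ k * ((z:ℂ) ^ (-(N:ℤ)) * w ^ (c:ℤ)) := by
    rw [← sum_mul, ← hxg]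
    have hzN : (z:ℂ) ^ (-(N:ℤ)) = (z ^ N)⁻¹ := by
      rw [zpow_neg, zpow_natCast]
    have hwc : (w:ℂ) ^ (c:ℤ) = w ^ c := zpow_natCast w c
    rw [hzN, hwc]
    field_simp
    ring
  rw [hQR, mul_sum, h2N]
  apply sum_congr rfl
  intro k hk
  rw [mem_range] at hk
  have hxk : x ^ k = z ^ k * ((w ^ N) ^ k)⁻¹ := by rw [hx, mul_pow, inv_pow]
  have hwpow : (w:ℂ) ^ T k * ((w ^ N) ^ k)⁻¹ * w ^ (c:ℤ) = w ^ e ((k:ℤ) - N) := by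
    have h1 : ((w:ℂ) ^ N) ^ k = w ^ ((N:ℤ) * k) := by
      rw [← pow_mul, ← zpow_natCast]; push_cast; ring_nf
    have h2 : (w:ℂ) ^ T k = w ^ ((T k : ℤ)) := (zpow_natCast _ _).symm
    rw [h1, h2, ← zpow_neg, ← zpow_add₀ hw, ← zpow_add₀ hw]
    congr 1
    have e1 : (T k : ℤ) * 2 = (k:ℤ) * (k + 1) := by
      have h := T_mul_two k; exact_mod_cast h
    have hcc2 : c * 2 + N = N * N := by
      have h5 : N * (N - 1) + N = N * N := by
        cases N with
        | zero => simp
        | succ m => simp [Nat.succ_sub_one]; ring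
      omega
    have e2 : (c : ℤ) * 2 + N = (N:ℤ) * N := by exact_mod_cast hcc2
    have e3 := e_mul_two ((k:ℤ) - N)
    have e4 : ((k:ℤ) - N) * (((k:ℤ) - N) + 1) = (k:ℤ)*(k+1) - 2*N*k + N*N - N := by ring
    linarith [e1, e2, e3, e4]
  have hzk : (z:ℂ) ^ k * z ^ (-(N:ℤ)) = z ^ ((k:ℤ) - N) := by
    rw [show (z:ℂ) ^ k = z ^ ((k:ℤ)) from (zpow_natCast _ _).symm, ← zpow_add₀ hz]
    congr 1
  rw [hxk, ← hwpow, ← hzk]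
  ring

lemma tsum_g (hw : w ≠ 0) (hz : z ≠ 0) (N : ℕ) :
    ∑' n : ℤ, g w N n * (w ^ e n * z ^ n) = ∏ j ∈ range N, a w z j := by
  rw [prod_a hw hz N]
  have hsupp : ∀ n ∉ Finset.Icc (-(N:ℤ)) N, g w N n * (w ^ e n * z ^ n) = 0 := by
    intro n hn
    rw [Finset.mem_Icc] at hn
    rw [g, if_neg (by omega)]
    ring
  rw [tsum_eq_sum hsupp]
  apply Finset.sum_nbij' (i := fun n : ℤ => (n + N).toNat) (j := fun k : ℕ => (k:ℤ) - N)
  · intro n hn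
    rw [Finset.mem_Icc] at hn
    rw [mem_range]
    omega
  · intro k hk
    rw [mem_range] at hk
    rw [Finset.mem_Icc]
    omega
  · intro n hn
    rw [Finset.mem_Icc] at hn
    omega
  · intro k hk
    rw [mem_range] at hk
    omega
  · intro n hn
    rw [Finset.mem_Icc] at hn
    rw [g, if_pos (by omega)]
    have hcast : (((n + N).toNat : ℤ)) - N = n := by omega
    rw [hcast]
    ring

section general

lemma summable_log_one_add {u : ℕ → ℂ} (hu : Summable u) :
    Summable (fun n => Complex.log (1 + u n)) := by
  have h0 : Tendsto (fun n => ‖u n‖) atTop (𝓝 0) := by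
    simpa using hu.tendsto_atTop_zero.norm
  have hev : ∀ᶠ n in atTop, ‖u n‖ ≤ 1/2 :=
    h0.eventually_le_const (by norm_num)
  apply Summable.of_norm_bounded_eventually_nat (g := fun n => 3/2 * ‖u n‖)
    (hu.norm.mul_left _)
  filter_upwards [hev] with n hn
  exact Complex.norm_log_one_add_half_le_self hn

lemma multipliable_one_add {u : ℕ → ℂ} (hu : Summable u) :
    Multipliable (fun n => 1 + u n) := by
  by_cases h0 : ∀ n, 1 + u n ≠ 0
  · exact Complex.multipliable_of_summable_log (summable_log_one_add hu)
  · push_neg at h0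
    obtain ⟨n₀, hn₀⟩ := h0
    refine ⟨0, ?_⟩
    have hev : ∀ᶠ s : Finset ℕ in atTop, ∏ i ∈ s, (1 + u i) = 0 := by
      filter_upwards [eventually_ge_atTop ({n₀} : Finset ℕ)] with s hs
      exact Finset.prod_eq_zero (hs (Finset.mem_singleton_self n₀)) hn₀
    exact Tendsto.congr' (by filter_upwards [hev] with s hs using hs.symm)
      tendsto_const_nhds

lemma tprod_one_add_ne_zero {u : ℕ → ℂ} (hu : Summable u) (h0 : ∀ n, 1 + u n ≠ 0) :
    (∏' n, (1 + u n)) ≠ 0 := by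
  have h := Complex.cexp_tsum_eq_tprod (f := fun n => 1 + u n) h0 (summable_log_one_add hu)
  rw [← h]
  exact Complex.exp_ne_zero _

end general

section limits
variable (hw : w ≠ 0) (hz : z ≠ 0) (hr : ‖w‖ < 1)
include hw hz hr

lemma summable_u : Summable (fun n : ℤ => w ^ e n * z ^ n) := by
  have hwz : ∀ n : ℤ, w ^ e n * z ^ n ≠ 0 :=
    fun n => mul_ne_zero (zpow_ne_zero _ hw) (zpow_ne_zero _ hz)
  have h0 : (0:ℝ) ≤ ‖w‖ := norm_nonneg w
  apply Summable.of_nat_of_neg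
  · apply summable_of_ratio_test_tendsto_lt_one (l := 0) zero_lt_one
      (Eventually.of_forall (fun m => hwz ↑m))
    have hstep : ∀ m : ℕ, w ^ e ((m:ℤ)+1) * z ^ ((m:ℤ)+1)
        = (w ^ e (m:ℤ) * z ^ (m:ℤ)) * (w ^ ((m:ℤ)+1) * z) := by
      intro m
      rw [e_succ, zpow_add₀ hw, zpow_add₀ hz, zpow_one]
      ring
    have heq : (fun m : ℕ => ‖w ^ e (↑(m+1):ℤ) * z ^ (↑(m+1):ℤ)‖ / ‖w ^ e (m:ℤ) * z ^ (m:ℤ)‖)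
        = fun m => ‖w‖ ^ (m+1) * ‖z‖ := by
      funext m
      have hc : ((m+1 : ℕ) : ℤ) = (m:ℤ) + 1 := by push_cast; ring
      rw [hc, hstep m, norm_mul, mul_comm, mul_div_assoc,
        div_self (norm_ne_zero_iff.2 (hwz ↑m)), mul_one, norm_mul, norm_zpow,
        show ((m:ℤ)+1) = ((m+1:ℕ):ℤ) from by push_cast; ring, zpow_natCast]
    rw [show (fun n : ℕ => ‖w ^ e (↑(n+1):ℤ) * z ^ (↑(n+1):ℤ)‖ / ‖w ^ e (n:ℤ) * z ^ (n:ℤ)‖)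
        = _ from heq]
    have := ((tendsto_pow_atTop_nhds_zero_of_lt_one h0 hr).comp
      (tendsto_add_atTop_nat 1)).mul_const ‖z‖
    simpa using this
  · apply summable_of_ratio_test_tendsto_lt_one (l := 0) zero_lt_one
      (Eventually.of_forall (fun m => hwz _))
    have hstep : ∀ m : ℕ, w ^ e (-(↑(m+1):ℤ)) * z ^ (-(↑(m+1):ℤ))
        = (w ^ e (-(m:ℤ)) * z ^ (-(m:ℤ))) * (w ^ ((m:ℤ)) * z⁻¹) := by
      intro m
      have he : e (-(↑(m+1):ℤ)) = e (-(m:ℤ)) + (m:ℤ) := by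
        have := e_succ (-(m:ℤ)-1)
        have hc : (-(m:ℤ)-1) + 1 = -(m:ℤ) := by ring
        rw [hc] at this
        have hc2 : (-(↑(m+1):ℤ)) = -(m:ℤ)-1 := by push_cast; ring
        rw [hc2]
        omega
      rw [he, zpow_add₀ hw, show (-(↑(m+1):ℤ)) = (-(m:ℤ)) + (-1) by push_cast; ring,
        zpow_add₀ hz]
      simp only [zpow_neg, zpow_one]
      ring
    have heq : (fun m : ℕ => ‖w ^ e (-(↑(m+1):ℤ)) * z ^ (-(↑(m+1):ℤ))‖
          / ‖w ^ e (-(m:ℤ)) * z ^ (-(m:ℤ))‖)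
        = fun m => ‖w‖ ^ m * ‖z⁻¹‖ := by
      funext m
      rw [hstep m, norm_mul, mul_comm, mul_div_assoc,
        div_self (norm_ne_zero_iff.2 (hwz _)), mul_one, norm_mul, norm_zpow, zpow_natCast]
    rw [show (fun n : ℕ => ‖w ^ e (-(↑(n+1):ℤ)) * z ^ (-(↑(n+1):ℤ))‖
          / ‖w ^ e (-(n:ℤ)) * z ^ (-(n:ℤ))‖) = _ from heq]
    have := (tendsto_pow_atTop_nhds_zero_of_lt_one h0 hr).mul_const ‖z⁻¹‖
    simpa using this

lemma tendsto_g (n : ℤ) : Tendsto (fun N => g w N n) atTop (𝓝 1) := by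
  set L := ∏' j : ℕ, (1 + -(w ^ (j+1))) with hL
  have hu : Summable (fun j : ℕ => -(w ^ (j+1))) := by
    apply Summable.neg
    exact ((summable_geometric_of_norm_lt_one hr).mul_left w).congr
      fun j => (pow_succ' w j).symm
  have h0 : ∀ j : ℕ, 1 + -(w ^ (j+1)) ≠ 0 := by
    intro j hcon
    have h1 : ‖w ^ (j+1)‖ < 1 := by
      rw [norm_pow]; exact pow_lt_one₀ (norm_nonneg w) hr (by omega)
    have h2 : w ^ (j+1) = 1 := by linear_combination -hcon
    rw [h2, norm_one] at h1
    exact lt_irrefl _ h1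
  have hmul : Multipliable (fun j : ℕ => 1 + -(w ^ (j+1))) := multipliable_one_add hu
  have hLne : L ≠ 0 := tprod_one_add_ne_zero hu h0
  have hFL : Tendsto (F w) atTop (𝓝 L) := by
    apply hmul.hasProd.tendsto_prod_nat.congr
    intro N
    exact prod_congr rfl fun j _ => by ring
  have hcomp : ∀ φ : ℕ → ℕ, Tendsto φ atTop atTop →
      Tendsto (fun N => F w (φ N)) atTop (𝓝 L) := fun φ hφ => hFL.comp hφ
  have h2 : Tendsto (fun N => F w (2*N)) atTop (𝓝 L) :=
    hcomp _ (tendsto_atTop_atTop.mpr fun b => ⟨b, fun a ha => by omega⟩)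
  have h3 : Tendsto (fun N : ℕ => F w ((n + N).toNat)) atTop (𝓝 L) :=
    hcomp _ (tendsto_atTop_atTop.mpr fun b => ⟨b + n.natAbs, fun a ha => by omega⟩)
  have h4 : Tendsto (fun N : ℕ => F w (((N:ℤ) - n).toNat)) atTop (𝓝 L) :=
    hcomp _ (tendsto_atTop_atTop.mpr fun b => ⟨b + n.natAbs, fun a ha => by omega⟩)
  have hmain : Tendsto
      (fun N : ℕ => F w N * F w (2*N) * (F w ((n + N).toNat) * F w (((N:ℤ) - n).toNat))⁻¹)
      atTop (𝓝 (L * L * (L * L)⁻¹)) :=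
    (hFL.mul h2).mul ((h3.mul h4).inv₀ (mul_ne_zero hLne hLne))
  have hone : L * L * (L * L)⁻¹ = 1 := mul_inv_cancel₀ (mul_ne_zero hLne hLne)
  rw [hone] at hmain
  apply Tendsto.congr' _ hmain
  filter_upwards [eventually_ge_atTop n.natAbs] with N hN
  have hcond : -(N:ℤ) ≤ n ∧ n ≤ N := by omega
  rw [g, if_pos hcond]
  have hk : (n + N).toNat ≤ 2*N := by omega
  have hFk := F_ne_zero hr ((n + N).toNat)
  have hFmk := F_ne_zero hr (2*N - (n + N).toNat)
  have hBe : B w (2*N) ((n + N).toNat)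
      = F w (2*N) * (F w ((n + N).toNat) * F w (2*N - (n + N).toNat))⁻¹ := by
    have hBF := B_mul_F (w := w) (2*N) _ hk
    field_simp
    linear_combination hBF
  have hsub : 2*N - (n + N).toNat = ((N:ℤ) - n).toNat := by omega
  rw [hBe, hsub]
  ring

end limits

end JTP

/-- Jacobi triple product identity: for `|q| > 1` and `z ∈ ℂ*`,
`Σ_{n∈ℤ} q^{-n(n+1)/2} z^n = ∏_{n=0}^∞ (1 − q^{-n-1})(1 + q^{-n-1}z)(1 + q^{-n}z⁻¹)`,
the infinite product being convergent. -/
theorem stmt1 (q : ℂ) (hq : 1 < ‖q‖) (z : ℂ) (hz : z ≠ 0) :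
    Multipliable (fun n : ℕ =>
      (1 - q ^ (-(n : ℤ) - 1)) * (1 + q ^ (-(n : ℤ) - 1) * z) * (1 + q ^ (-(n : ℤ)) * z⁻¹)) ∧
    theta q z = ∏' n : ℕ,
      (1 - q ^ (-(n : ℤ) - 1)) * (1 + q ^ (-(n : ℤ) - 1) * z) * (1 + q ^ (-(n : ℤ)) * z⁻¹) := by
  have hq1 : (1:ℝ) < ‖q‖ := by exact hq
  have hq0 : q ≠ 0 := by
    intro h; rw [h, norm_zero] at hq1; linarith
  set w : ℂ := q⁻¹ with hwdef
  have hw : w ≠ 0 := inv_ne_zero hq0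
  have hr : ‖w‖ < 1 := by
    rw [hwdef, norm_inv]
    exact inv_lt_one_of_one_lt₀ hq1
  have h0 : (0:ℝ) ≤ ‖w‖ := norm_nonneg w
  have hstmt : (fun n : ℕ => (1 - q ^ (-(n:ℤ) - 1)) * (1 + q ^ (-(n:ℤ) - 1) * z)
        * (1 + q ^ (-(n:ℤ)) * z⁻¹)) = fun n => JTP.a w z n := by
    funext n
    rw [JTP.a]
    have h1 : q ^ (-(n:ℤ) - 1) = w ^ (n+1) := by
      rw [show -(n:ℤ) - 1 = -(((n+1 : ℕ)) : ℤ) from by push_cast; ring, zpow_neg,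
        zpow_natCast, hwdef, inv_pow]
    have h2 : q ^ (-(n:ℤ)) = w ^ n := by
      rw [zpow_neg, zpow_natCast, hwdef, inv_pow]
    rw [h1, h2]
  -- summability of the difference from 1
  have hbnd : ∀ n : ℕ, ‖JTP.a w z n - 1‖
      ≤ ((1+‖z‖)*(1+‖z⁻¹‖) + ‖z‖*(1+‖z⁻¹‖) + ‖z⁻¹‖) * ‖w‖^n := by
    intro n
    have key : JTP.a w z n - 1
        = (-(w^(n+1))) * ((1 + w^(n+1)*z) * (1 + w^n*z⁻¹))
          + (w^(n+1)*z) * (1 + w^n*z⁻¹) + w^n*z⁻¹ := by rw [JTP.a]; ring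
    have hwn : ‖w‖^(n+1) ≤ ‖w‖^n := pow_le_pow_of_le_one h0 hr.le (by omega)
    have hw1 : ‖w‖^(n+1) ≤ 1 := pow_le_one₀ h0 hr.le
    have hw1' : ‖w‖^n ≤ 1 := pow_le_one₀ h0 hr.le
    have hA : ‖(1:ℂ) + w^(n+1)*z‖ ≤ 1 + ‖z‖ := by
      calc ‖(1:ℂ) + w^(n+1)*z‖ ≤ ‖(1:ℂ)‖ + ‖w^(n+1)*z‖ := norm_add_le _ _
        _ = 1 + ‖w‖^(n+1) * ‖z‖ := by rw [norm_one, norm_mul, norm_pow]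
        _ ≤ 1 + 1 * ‖z‖ := by
            have := mul_le_mul_of_nonneg_right hw1 (norm_nonneg z)
            linarith
        _ = 1 + ‖z‖ := by ring
    have hB2 : ‖(1:ℂ) + w^n*z⁻¹‖ ≤ 1 + ‖z⁻¹‖ := by
      calc ‖(1:ℂ) + w^n*z⁻¹‖ ≤ ‖(1:ℂ)‖ + ‖w^n*z⁻¹‖ := norm_add_le _ _
        _ = 1 + ‖w‖^n * ‖z⁻¹‖ := by rw [norm_one, norm_mul, norm_pow]
        _ ≤ 1 + 1 * ‖z⁻¹‖ := by
            have := mul_le_mul_of_nonneg_right hw1' (norm_nonneg z⁻¹)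
            linarith
        _ = 1 + ‖z⁻¹‖ := by ring
    have t1 : ‖(-(w^(n+1))) * ((1 + w^(n+1)*z) * (1 + w^n*z⁻¹))‖
        ≤ ‖w‖^n * ((1+‖z‖)*(1+‖z⁻¹‖)) := by
      rw [norm_mul, norm_neg, norm_pow, norm_mul]
      apply mul_le_mul hwn (mul_le_mul hA hB2 (norm_nonneg _) (by positivity))
        (by positivity) (by positivity)
    have t2 : ‖(w^(n+1)*z) * (1 + w^n*z⁻¹)‖ ≤ (‖w‖^n * ‖z‖) * (1+‖z⁻¹‖) := by
      rw [norm_mul, norm_mul, norm_pow]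
      apply mul_le_mul (mul_le_mul_of_nonneg_right hwn (norm_nonneg z)) hB2
        (norm_nonneg _) (by positivity)
    have t3 : ‖w^n*z⁻¹‖ = ‖w‖^n * ‖z⁻¹‖ := by rw [norm_mul, norm_pow]
    calc ‖JTP.a w z n - 1‖
        ≤ ‖(-(w^(n+1))) * ((1 + w^(n+1)*z) * (1 + w^n*z⁻¹))‖
          + ‖(w^(n+1)*z) * (1 + w^n*z⁻¹)‖ + ‖w^n*z⁻¹‖ := by
          rw [key]; exact norm_add₃_le
      _ ≤ ‖w‖^n * ((1+‖z‖)*(1+‖z⁻¹‖)) + (‖w‖^n * ‖z‖) * (1+‖z⁻¹‖) + ‖w‖^n * ‖z⁻¹‖ := by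
          rw [t3]; exact add_le_add (add_le_add t1 t2) le_rfl
      _ = ((1+‖z‖)*(1+‖z⁻¹‖) + ‖z‖*(1+‖z⁻¹‖) + ‖z⁻¹‖) * ‖w‖^n := by ring
  have hsummA : Summable (fun n : ℕ => JTP.a w z n - 1) :=
    Summable.of_norm_bounded
      ((summable_geometric_of_lt_one h0 hr).mul_left _) hbnd
  have hmult : Multipliable (fun n => JTP.a w z n) := by
    have := JTP.multipliable_one_add hsummA
    exact this.congr fun n => by ring
  have hmultS : Multipliable (fun n : ℕ =>
      (1 - q ^ (-(n:ℤ) - 1)) * (1 + q ^ (-(n:ℤ) - 1) * z) * (1 + q ^ (-(n:ℤ)) * z⁻¹)) := by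
    rw [hstmt]; exact hmult
  refine ⟨hmultS, ?_⟩
  -- theta as tsum over the w-form
  have htheta : theta q z = ∑' n : ℤ, w ^ JTP.e n * z ^ n := by
    rw [theta]
    apply tsum_congr
    intro n
    congr 1
    obtain ⟨c, hc⟩ := Int.even_mul_succ_self n
    have hE : -(n * (n + 1)) / 2 = -(JTP.e n) := by unfold JTP.e; omega
    rw [hE, zpow_neg, hwdef, inv_zpow]
  have hsumU := JTP.summable_u hw hz hr
  have hnormU : Summable (fun n : ℤ => ‖w ^ JTP.e n * z ^ n‖) := summable_norm_iff.mpr hsumU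
  have hTan : Filter.Tendsto (fun N => ∑' n : ℤ, JTP.g w N n * (w ^ JTP.e n * z ^ n))
      Filter.atTop (nhds (∑' n : ℤ, w ^ JTP.e n * z ^ n)) := by
    apply tendsto_tsum_of_dominated_convergence
      (bound := fun n : ℤ => (Real.exp (‖w‖/(1-‖w‖))^2 * Real.exp (‖w‖/(1-‖w‖)^2)^2)
        * ‖w ^ JTP.e n * z ^ n‖)
      (hnormU.mul_left _)
    · intro n
      have h1 := (JTP.tendsto_g hw hz hr n).mul_const (w ^ JTP.e n * z ^ n)
      simpa using h1
    · apply Filter.Eventually.of_forall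
      intro N n
      rw [norm_mul]
      exact mul_le_mul_of_nonneg_right (JTP.norm_g_le hr N n) (norm_nonneg _)
  have hTan2 : Filter.Tendsto (fun N => ∏ j ∈ Finset.range N, JTP.a w z j)
      Filter.atTop (nhds (∑' n : ℤ, w ^ JTP.e n * z ^ n)) :=
    hTan.congr (fun N => JTP.tsum_g hw hz N)
  have hP : Filter.Tendsto (fun N => ∏ j ∈ Finset.range N, JTP.a w z j)
      Filter.atTop (nhds (∏' n, JTP.a w z n)) :=
    hmult.hasProd.tendsto_prod_nat
  rw [htheta, hstmt]
  exact tendsto_nhds_unique hTan2 hP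
end

section
/- Let q ∈ ℂ with |q| > 1. The zeros of the function Θ_q on ℂ* are exactly the points of the q-spiral −q^ℤ = {−q^m : m ∈ ℤ}, and each such zero has order 1. -/
open Filter Finset Topology

namespace ThetaAux

/-- Partial products `∏_{k=1}^N (1 + w p^k)`. -/
noncomputable def Qm (p : ℂ) (N : ℕ) (w : ℂ) : ℂ := ∏ k ∈ Finset.range N, (1 + w * p ^ (k + 1))

/-- Telescoping increments. -/
noncomputable def dd (p : ℂ) (k : ℕ) (w : ℂ) : ℂ := Qm p k w * (w * p ^ (k + 1))

/-- The infinite product `∏_{k=1}^∞ (1 + w p^k)`, as a telescoping sum. -/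
noncomputable def P (p : ℂ) (w : ℂ) : ℂ := 1 + ∑' k : ℕ, dd p k w

lemma Qm_zero (p : ℂ) (w : ℂ) : Qm p 0 w = 1 := by simp [Qm]

lemma Qm_succ (p : ℂ) (N : ℕ) (w : ℂ) :
    Qm p (N + 1) w = Qm p N w * (1 + w * p ^ (N + 1)) := Finset.prod_range_succ _ _

lemma sum_dd (p : ℂ) (N : ℕ) (w : ℂ) : 1 + ∑ k ∈ Finset.range N, dd p k w = Qm p N w := by
  induction N with
  | zero => simp [Qm_zero]
  | succ n ih =>
      rw [Finset.sum_range_succ, ← add_assoc, ih, Qm_succ, dd]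
      ring

lemma prod_one_add_le_exp {ι : Type*} (s : Finset ι) (f : ι → ℝ) (hf : ∀ i ∈ s, 0 ≤ f i) :
    ∏ i ∈ s, (1 + f i) ≤ Real.exp (∑ i ∈ s, f i) := by
  rw [Real.exp_sum]
  refine Finset.prod_le_prod (fun i hi => by linarith [hf i hi]) (fun i hi => ?_)
  linarith [Real.add_one_le_exp (f i)]

lemma Qm_norm_le {p : ℂ} (hp : ‖p‖ < 1) (N : ℕ) {R : ℝ} (hR : 0 ≤ R) {w : ℂ} (hw : ‖w‖ ≤ R) :
    ‖Qm p N w‖ ≤ Real.exp (R / (1 - ‖p‖)) := by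
  have hp0 : (0:ℝ) ≤ ‖p‖ := norm_nonneg _
  have h1 : ‖Qm p N w‖ ≤ ∏ k ∈ Finset.range N, (1 + R * ‖p‖ ^ (k + 1)) := by
    rw [Qm]
    refine (Finset.norm_prod_le _ _).trans (Finset.prod_le_prod (fun i _ => norm_nonneg _)
      (fun i _ => ?_))
    calc ‖1 + w * p ^ (i + 1)‖ ≤ ‖(1:ℂ)‖ + ‖w * p ^ (i + 1)‖ := norm_add_le _ _
      _ ≤ 1 + R * ‖p‖ ^ (i + 1) := by
          rw [norm_one, norm_mul, norm_pow]
          gcongr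
  refine h1.trans ((prod_one_add_le_exp _ _ (fun i _ => by positivity)).trans ?_)
  rw [Real.exp_le_exp]
  have hsum : ∑ k ∈ Finset.range N, ‖p‖ ^ (k + 1) ≤ 1 / (1 - ‖p‖) := by
    calc ∑ k ∈ Finset.range N, ‖p‖ ^ (k + 1) ≤ ∑ k ∈ Finset.range N, ‖p‖ ^ k := by
          refine Finset.sum_le_sum (fun i _ => ?_)
          exact pow_le_pow_of_le_one hp0 hp.le (by omega)
      _ ≤ ∑' k : ℕ, ‖p‖ ^ k := (summable_geometric_of_lt_one hp0 hp).sum_le_tsum _ (fun i _ => by positivity)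
      _ = 1 / (1 - ‖p‖) := by rw [tsum_geometric_of_lt_one hp0 hp, one_div]
  calc ∑ k ∈ Finset.range N, R * ‖p‖ ^ (k + 1)
      = R * ∑ k ∈ Finset.range N, ‖p‖ ^ (k + 1) := by rw [Finset.mul_sum]
    _ ≤ R * (1 / (1 - ‖p‖)) := by
        refine mul_le_mul_of_nonneg_left hsum hR
    _ = R / (1 - ‖p‖) := by ring

lemma dd_norm_le {p : ℂ} (hp : ‖p‖ < 1) (k : ℕ) {R : ℝ} (hR : 0 ≤ R) {w : ℂ} (hw : ‖w‖ ≤ R) :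
    ‖dd p k w‖ ≤ Real.exp (R / (1 - ‖p‖)) * R * ‖p‖ ^ (k + 1) := by
  rw [dd, norm_mul, norm_mul, norm_pow]
  calc ‖Qm p k w‖ * (‖w‖ * ‖p‖ ^ (k + 1))
      ≤ Real.exp (R / (1 - ‖p‖)) * (R * ‖p‖ ^ (k + 1)) := by
        have h1 := Qm_norm_le hp k hR hw
        have h2 : (0:ℝ) ≤ ‖p‖ ^ (k+1) := by positivity
        exact mul_le_mul h1 (by gcongr) (by positivity) (by positivity)
    _ = Real.exp (R / (1 - ‖p‖)) * R * ‖p‖ ^ (k + 1) := by ring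

lemma summable_geom_aux {p : ℂ} (hp : ‖p‖ < 1) (C : ℝ) :
    Summable (fun k : ℕ => C * ‖p‖ ^ (k + 1)) := by
  have h : Summable (fun k : ℕ => ‖p‖ ^ k) := summable_geometric_of_lt_one (norm_nonneg _) hp
  have h2 : Summable (fun k : ℕ => ‖p‖ ^ (k + 1)) := by
    simpa [pow_succ'] using h.mul_left ‖p‖
  exact h2.mul_left C

lemma summable_dd {p : ℂ} (hp : ‖p‖ < 1) (w : ℂ) : Summable (fun k => dd p k w) := by
  have hp0 : (0:ℝ) ≤ ‖p‖ := norm_nonneg _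
  refine Summable.of_norm_bounded ?_ (fun k => dd_norm_le hp k (norm_nonneg w) le_rfl)
  exact summable_geom_aux hp _

lemma tendsto_Qm {p : ℂ} (hp : ‖p‖ < 1) (w : ℂ) :
    Tendsto (fun N => Qm p N w) atTop (𝓝 (P p w)) := by
  have h := ((summable_dd hp w).hasSum).tendsto_sum_nat
  have h2 : Tendsto (fun N => 1 + ∑ k ∈ Finset.range N, dd p k w) atTop
      (𝓝 (1 + ∑' k : ℕ, dd p k w)) := tendsto_const_nhds.add h
  simpa [sum_dd, P] using h2

lemma P_differentiable {p : ℂ} (hp : ‖p‖ < 1) : Differentiable ℂ (P p) := by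
  have key : ∀ R : ℝ, 0 < R → DifferentiableOn ℂ (fun w => ∑' k : ℕ, dd p k w)
      (Metric.ball (0:ℂ) R) := by
    intro R hR
    have hu : Summable (fun k : ℕ => Real.exp (R / (1 - ‖p‖)) * R * ‖p‖ ^ (k + 1)) :=
      summable_geom_aux hp _
    have htu : TendstoUniformlyOn (fun (t : Finset ℕ) x => ∑ k ∈ t, dd p k x)
        (fun x => ∑' k, dd p k x) atTop (Metric.ball (0:ℂ) R) := by
      refine tendstoUniformlyOn_tsum hu (fun k x hx => ?_)
      exact dd_norm_le hp k hR.le (by simpa using (Metric.mem_ball.mp hx).le)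
    refine (htu.tendstoLocallyUniformlyOn).differentiableOn ?_ Metric.isOpen_ball
    refine Eventually.of_forall (fun t => ?_)
    refine DifferentiableOn.fun_sum (fun k _ => ?_)
    refine Differentiable.differentiableOn ?_
    unfold dd Qm
    refine Differentiable.mul ?_ (differentiable_id.mul (differentiable_const _))
    exact Differentiable.fun_finsetProd (fun i _ =>
      (differentiable_const (1:ℂ)).add (differentiable_id.mul (differentiable_const _)))
  have : Differentiable ℂ (fun w => ∑' k : ℕ, dd p k w) := by
    intro w
    have hR : ‖w‖ < ‖w‖ + 1 := by linarith
    have := (key (‖w‖ + 1) (by positivity)) w (by simpa [Metric.mem_ball] using hR)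
    exact (this.differentiableAt (Metric.isOpen_ball.mem_nhds (by simpa using hR)))
  exact (differentiable_const 1).add this

lemma P_zero (p : ℂ) : P p 0 = 1 := by simp [P, dd]

lemma Qm_funEq (p : ℂ) (N : ℕ) (w : ℂ) :
    (1 + w * p) * Qm p N (p * w) = Qm p (N + 1) w := by
  rw [Qm, Qm, Finset.prod_range_succ']
  rw [show ∏ k ∈ Finset.range N, (1 + p * w * p ^ (k + 1))
      = ∏ k ∈ Finset.range N, (1 + w * p ^ (k + 1 + 1)) from
    Finset.prod_congr rfl (fun k _ => by ring)]
  ring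

lemma P_funEq {p : ℂ} (hp : ‖p‖ < 1) (w : ℂ) : P p w = (1 + w * p) * P p (p * w) := by
  have h1 : Tendsto (fun N => (1 + w * p) * Qm p N (p * w)) atTop
      (𝓝 ((1 + w * p) * P p (p * w))) := (tendsto_Qm hp (p * w)).const_mul _
  have h2 : Tendsto (fun N => Qm p (N + 1) w) atTop (𝓝 (P p w)) :=
    (tendsto_Qm hp w).comp (tendsto_add_atTop_nat 1)
  refine tendsto_nhds_unique ?_ h1
  refine h2.congr (fun N => ?_)
  exact (Qm_funEq p N w).symm

lemma P_iter {p : ℂ} (hp : ‖p‖ < 1) (N : ℕ) (w : ℂ) :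
    P p w = Qm p N w * P p (p ^ N * w) := by
  induction N with
  | zero => simp [Qm_zero]
  | succ n ih =>
      rw [ih, P_funEq hp (p ^ n * w), Qm_succ,
        show p * (p ^ n * w) = p ^ (n + 1) * w by ring]
      ring

lemma P_nhds_zero {p : ℂ} (hp : ‖p‖ < 1) :
    ∃ ε > 0, ∀ v : ℂ, ‖v‖ < ε → P p v ≠ 0 := by
  have hopen : IsOpen {w : ℂ | P p w ≠ 0} :=
    IsOpen.preimage (P_differentiable hp).continuous isOpen_ne
  have h0 : (0:ℂ) ∈ {w : ℂ | P p w ≠ 0} := by simp [P_zero]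
  obtain ⟨ε, hε, hball⟩ := Metric.isOpen_iff.mp hopen 0 h0
  exact ⟨ε, hε, fun v hv => hball (by simpa [Metric.mem_ball, dist_zero_right] using hv)⟩

lemma P_ne_zero {p : ℂ} (hp : ‖p‖ < 1) {w : ℂ}
    (hw : ∀ k : ℕ, 1 + w * p ^ (k + 1) ≠ 0) : P p w ≠ 0 := by
  obtain ⟨ε, hε, hball⟩ := P_nhds_zero hp
  have htend : Tendsto (fun N : ℕ => ‖p‖ ^ N * ‖w‖) atTop (𝓝 0) := by
    simpa using (tendsto_pow_atTop_nhds_zero_of_norm_lt_one (by simpa using hp)).mul_const ‖w‖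
  obtain ⟨N, hN⟩ := (htend.eventually (eventually_lt_nhds hε)).exists
  have h1 : P p (p ^ N * w) ≠ 0 := hball _ (by rwa [norm_mul, norm_pow])
  have h2 : Qm p N w ≠ 0 := by
    rw [Qm]
    exact Finset.prod_ne_zero_iff.mpr (fun k _ => hw k)
  rw [P_iter hp N w]
  exact mul_ne_zero h2 h1

lemma P_eq_zero {p : ℂ} (hp : ‖p‖ < 1) {w : ℂ} {k : ℕ}
    (hk : 1 + w * p ^ (k + 1) = 0) : P p w = 0 := by
  rw [P_iter hp (k + 1) w, Qm]
  rw [Finset.prod_eq_zero (Finset.self_mem_range_succ k) hk]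
  ring

lemma P_factor {p : ℂ} (hp : ‖p‖ < 1) (m : ℕ) (w₀ : ℂ)
    (h0 : ∀ k : ℕ, k ≠ m → 1 + w₀ * p ^ (k + 1) ≠ 0) :
    ∃ g : ℂ → ℂ, Differentiable ℂ g ∧ g w₀ ≠ 0 ∧
      ∀ w, P p w = (1 + w * p ^ (m + 1)) * g w := by
  obtain ⟨ε, hε, hball⟩ := P_nhds_zero hp
  have htend : Tendsto (fun N : ℕ => ‖p‖ ^ N * ‖w₀‖) atTop (𝓝 0) := by
    simpa using (tendsto_pow_atTop_nhds_zero_of_norm_lt_one (by simpa using hp)).mul_const ‖w₀‖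
  obtain ⟨N, hNm, hN⟩ := ((htend.eventually (eventually_lt_nhds hε)).and
    (eventually_ge_atTop (m + 1))).exists
  refine ⟨fun w => (∏ k ∈ (Finset.range N).erase m, (1 + w * p ^ (k + 1))) *
      P p (p ^ N * w), ?_, ?_, ?_⟩
  · refine Differentiable.mul ?_ ?_
    · exact Differentiable.fun_finsetProd (fun i _ =>
        (differentiable_const (1:ℂ)).add (differentiable_id.mul (differentiable_const _)))
    · exact (P_differentiable hp).comp ((differentiable_const _).mul differentiable_id)
  · refine mul_ne_zero ?_ (hball _ (by rwa [norm_mul, norm_pow]))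
    exact Finset.prod_ne_zero_iff.mpr
      (fun k hk => h0 k (Finset.ne_of_mem_erase hk))
  · intro w
    rw [P_iter hp N w, Qm, ← Finset.mul_prod_erase _ _
      (Finset.mem_range.mpr (by omega : m < N))]
    ring

/-- Triangular numbers. -/
def T : ℕ → ℕ
  | 0 => 0
  | (n + 1) => T n + (n + 1)

noncomputable def Em (p : ℂ) (N : ℕ) : ℂ := Qm p N (-1)

noncomputable def gb (p : ℂ) (N r : ℕ) : ℂ := Em p N / (Em p r * Em p (N - r))

lemma one_sub_pow_ne {p : ℂ} (hp : ‖p‖ < 1) {k : ℕ} (hk : 1 ≤ k) : (1:ℂ) - p ^ k ≠ 0 := by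
  rw [sub_ne_zero]
  intro h
  have : ‖p ^ k‖ < 1 := by
    rw [norm_pow]
    exact pow_lt_one₀ (norm_nonneg _) hp (by omega)
  rw [← h] at this
  simp at this

lemma Em_zero (p : ℂ) : Em p 0 = 1 := by simp [Em, Qm_zero]

lemma Em_succ (p : ℂ) (N : ℕ) : Em p (N + 1) = Em p N * (1 - p ^ (N + 1)) := by
  rw [Em, Em, Qm_succ]
  ring

lemma Em_ne_zero {p : ℂ} (hp : ‖p‖ < 1) (N : ℕ) : Em p N ≠ 0 := by
  induction N with
  | zero => simp [Em_zero]
  | succ n ih =>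
      rw [Em_succ]
      exact mul_ne_zero ih (one_sub_pow_ne hp (by omega))

lemma gb_zero {p : ℂ} (hp : ‖p‖ < 1) (N : ℕ) : gb p N 0 = 1 := by
  rw [gb, Em_zero]
  simp [div_self (Em_ne_zero hp N)]

lemma gb_self {p : ℂ} (hp : ‖p‖ < 1) (N : ℕ) : gb p N N = 1 := by
  rw [gb, Nat.sub_self, Em_zero]
  simp [div_self (Em_ne_zero hp N)]

lemma gb_pascal {p : ℂ} (hp : ‖p‖ < 1) {N s : ℕ} (hs1 : 1 ≤ s) (hs2 : s ≤ N) :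
    gb p (N + 1) s = gb p N s + p ^ (N + 1 - s) * gb p N (s - 1) := by
  have e1 : Em p s = Em p (s - 1) * (1 - p ^ s) := by
    have h := Em_succ p (s - 1)
    rwa [show s - 1 + 1 = s by omega] at h
  have e2 : Em p (N + 1 - s) = Em p (N - s) * (1 - p ^ (N + 1 - s)) := by
    have h := Em_succ p (N - s)
    rwa [show N - s + 1 = N + 1 - s by omega] at h
  have e3 : Em p (N + 1) = Em p N * (1 - p ^ (N + 1)) := Em_succ p N
  have hpow : p ^ (N + 1 - s) * p ^ s = p ^ (N + 1) := by
    rw [← pow_add]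
    congr 1
    omega
  have hD1 : Em p (s - 1) ≠ 0 := Em_ne_zero hp _
  have hD2 : Em p (N - s) ≠ 0 := Em_ne_zero hp _
  have hA : (1:ℂ) - p ^ s ≠ 0 := one_sub_pow_ne hp hs1
  have hB : (1:ℂ) - p ^ (N + 1 - s) ≠ 0 := one_sub_pow_ne hp (by omega)
  have aux : ∀ E D1 D2 a b : ℂ, D1 ≠ 0 → D2 ≠ 0 → 1 - a ≠ 0 → 1 - b ≠ 0 →
      E * (1 - b * a) / (D1 * (1 - a) * (D2 * (1 - b)))
        = E / (D1 * (1 - a) * D2) + b * (E / (D1 * (D2 * (1 - b)))) := by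
    intro E D1 D2 a b h1 h2 h3 h4
    field_simp
    ring
  rw [gb, gb, gb, show N - (s - 1) = N + 1 - s by omega, e1, e2, e3, ← hpow]
  exact aux _ _ _ _ _ hD1 hD2 hA hB

theorem qBinom {p : ℂ} (hp : ‖p‖ < 1) (N : ℕ) (x : ℂ) :
    Qm p N x = ∑ r ∈ Finset.range (N + 1), gb p N r * p ^ T r * x ^ r := by
  induction N with
  | zero => simp [Qm_zero, gb_zero hp, T]
  | succ n ih =>
      rw [Qm_succ, ih]
      set f : ℕ → ℂ := fun r => gb p n r * p ^ T r * x ^ r with hf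
      set g : ℕ → ℂ := fun r => gb p (n + 1) r * p ^ T r * x ^ r with hg
      have hmid : ∀ r ∈ Finset.range n, g (r + 1) = f (r + 1) + f r * (x * p ^ (n + 1)) := by
        intro r hr
        have hrn : r < n := Finset.mem_range.mp hr
        have ht : p ^ T (r + 1) = p ^ T r * p ^ (r + 1) := by
          rw [show T (r + 1) = T r + (r + 1) from rfl, pow_add]
        have hx : p ^ (n + 1 - (r + 1)) * p ^ (r + 1) = p ^ (n + 1) := by
          rw [← pow_add]
          congr 1
          omega
        rw [hg, hf]
        simp only []
        rw [gb_pascal hp (by omega) (by omega), ht]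
        simp only [Nat.add_sub_cancel]
        linear_combination gb p n r * p ^ T r * x ^ (r + 1) * hx
      have lhs_split : ∑ r ∈ Finset.range (n + 2), g r
          = (∑ r ∈ Finset.range n, g (r + 1)) + g 0 + g (n + 1) := by
        rw [Finset.sum_range_succ, Finset.sum_range_succ']
      have rhs1 : ∑ r ∈ Finset.range (n + 1), f r
          = (∑ r ∈ Finset.range n, f (r + 1)) + f 0 := Finset.sum_range_succ' _ _
      have hsum : ∑ r ∈ Finset.range n, g (r + 1)
          = (∑ r ∈ Finset.range n, f (r + 1)) + ∑ r ∈ Finset.range n, f r * (x * p ^ (n + 1)) := by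
        rw [← Finset.sum_add_distrib]
        exact Finset.sum_congr rfl hmid
      have rhs2 : ∑ r ∈ Finset.range (n + 1), f r * (x * p ^ (n + 1))
          = (∑ r ∈ Finset.range n, f r * (x * p ^ (n + 1))) + f n * (x * p ^ (n + 1)) :=
        Finset.sum_range_succ _ _
      have hg0 : g 0 = f 0 := by
        simp only [hg, hf, gb_zero hp]
      have htop : g (n + 1) = f n * (x * p ^ (n + 1)) := by
        simp only [hg, hf, gb_self hp]
        rw [show T (n + 1) = T n + (n + 1) from rfl, pow_add]
        ring
      calc (∑ r ∈ Finset.range (n + 1), f r) * (1 + x * p ^ (n + 1))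
          = (∑ r ∈ Finset.range (n + 1), f r)
            + ∑ r ∈ Finset.range (n + 1), f r * (x * p ^ (n + 1)) := by
            rw [← Finset.sum_mul]
            ring
        _ = ∑ r ∈ Finset.range (n + 2), g r := by
            rw [lhs_split, rhs1, rhs2, hsum, hg0, htop]
            ring

/-- `t n = n(n+1)/2` over the integers. -/
def t (n : ℤ) : ℤ := n * (n + 1) / 2

lemma two_t (n : ℤ) : 2 * t n = n * (n + 1) := by
  obtain ⟨k, hk⟩ := Int.even_mul_succ_self n
  show 2 * (n * (n + 1) / 2) = n * (n + 1)
  rw [hk, ← two_mul, Int.mul_ediv_cancel_left _ (by norm_num : (2:ℤ) ≠ 0)]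

lemma t_succ (n : ℤ) : t (n + 1) = t n + (n + 1) := by
  apply mul_left_cancel₀ (by norm_num : (2:ℤ) ≠ 0)
  rw [mul_add, two_t, two_t]
  ring

lemma t_natCast (m : ℕ) : ((T m : ℤ)) = t (m : ℤ) := by
  induction m with
  | zero => show ((0:ℕ):ℤ) = t 0; simp [t]
  | succ n ih =>
      show ((T n + (n + 1) : ℕ) : ℤ) = t ((n:ℤ) + 1)
      rw [t_succ]
      push_cast [ih]
      ring

lemma theta_exp (n : ℤ) : (-(n * (n + 1))) / 2 = - t n := by
  rw [← two_t n, show -(2 * t n) = 2 * (- t n) by ring,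
    Int.mul_ediv_cancel_left _ (by norm_num : (2:ℤ) ≠ 0)]

lemma ht_id (i N : ℕ) : t ((i:ℤ) - (N:ℤ))
    = ((T i : ℤ)) - ((N * i : ℕ) : ℤ) + ((N * N : ℕ) : ℤ) - ((T N : ℕ) : ℤ) := by
  apply mul_left_cancel₀ (by norm_num : (2:ℤ) ≠ 0)
  rw [two_t]
  push_cast [t_natCast]
  linear_combination (-1 : ℤ) * two_t (i:ℤ) + two_t (N:ℤ)

lemma T_sum (N : ℕ) : T N = ∑ k ∈ Finset.range N, (k + 1) := by
  induction N with
  | zero => rfl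
  | succ n ih => rw [Finset.sum_range_succ, ← ih]; rfl

lemma prod_shift {p : ℂ} (hp0 : p ≠ 0) (z : ℂ) (N : ℕ) :
    ∏ k ∈ Finset.range N, (1 + (z * (p ^ N)⁻¹) * p ^ (N + k + 1)) = Qm p N z := by
  rw [Qm]
  refine Finset.prod_congr rfl (fun k _ => ?_)
  have h : (p ^ N)⁻¹ * p ^ (N + k + 1) = p ^ (k + 1) := by
    rw [show N + k + 1 = N + (k + 1) by omega, pow_add]
    field_simp
  rw [mul_assoc, h]

lemma prod_low {p z : ℂ} (hp0 : p ≠ 0) (hz : z ≠ 0) (N : ℕ) :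
    ∏ k ∈ Finset.range N, (1 + (z * (p ^ N)⁻¹) * p ^ (k + 1))
      = z ^ N * p ^ T N * (p ^ (N * N))⁻¹ * ∏ k ∈ Finset.range N, (1 + z⁻¹ * p ^ k) := by
  have step1 : ∀ k ∈ Finset.range N, (1 + (z * (p ^ N)⁻¹) * p ^ (k + 1))
      = (z * p ^ (k + 1) * (p ^ N)⁻¹) * (1 + z⁻¹ * p ^ (N - (k + 1))) := by
    intro k hk
    have hkN : k < N := Finset.mem_range.mp hk
    have hpk : p ^ (k + 1) * p ^ (N - (k + 1)) = p ^ N := by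
      rw [← pow_add]
      congr 1
      omega
    field_simp
    linear_combination (-1 : ℂ) * hpk
  rw [Finset.prod_congr rfl step1, Finset.prod_mul_distrib, Finset.prod_mul_distrib,
    Finset.prod_mul_distrib, Finset.prod_const, Finset.prod_const, Finset.card_range,
    Finset.prod_pow_eq_pow_sum, ← T_sum, inv_pow, ← pow_mul]
  have hrefl : ∏ k ∈ Finset.range N, (1 + z⁻¹ * p ^ (N - (k + 1)))
      = ∏ k ∈ Finset.range N, (1 + z⁻¹ * p ^ k) := by
    calc ∏ k ∈ Finset.range N, (1 + z⁻¹ * p ^ (N - (k + 1)))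
        = ∏ k ∈ Finset.range N, (1 + z⁻¹ * p ^ (N - 1 - k)) :=
          Finset.prod_congr rfl (fun k _ => by rw [show N - (k + 1) = N - 1 - k by omega])
      _ = ∏ k ∈ Finset.range N, (1 + z⁻¹ * p ^ k) := Finset.prod_range_reflect (fun k => 1 + z⁻¹ * p ^ k) N
  rw [hrefl]

lemma star {p z : ℂ} (hp : ‖p‖ < 1) (hp0 : p ≠ 0) (hz : z ≠ 0) (N : ℕ) :
    ∑ i ∈ Finset.range (2 * N + 1), gb p (2 * N) i * p ^ t ((i:ℤ) - (N:ℤ)) * z ^ ((i:ℤ) - (N:ℤ))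
      = Qm p N z * ∏ k ∈ Finset.range N, (1 + z⁻¹ * p ^ k) := by
  have hpN : (p : ℂ) ^ N ≠ 0 := pow_ne_zero _ hp0
  have hq := qBinom hp (2 * N) (z * (p ^ N)⁻¹)
  have hsplit : Qm p (2 * N) (z * (p ^ N)⁻¹)
      = (z ^ N * p ^ T N * (p ^ (N * N))⁻¹ * ∏ k ∈ Finset.range N, (1 + z⁻¹ * p ^ k))
        * Qm p N z := by
    rw [Qm, two_mul, Finset.prod_range_add]
    rw [show (∏ k ∈ Finset.range N, (1 + z * (p ^ N)⁻¹ * p ^ (N + k + 1))) = Qm p N z from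
      prod_shift hp0 z N]
    rw [← prod_low hp0 hz N]
  have key : ∀ i : ℕ,
      gb p (2 * N) i * p ^ t ((i:ℤ) - (N:ℤ)) * z ^ ((i:ℤ) - (N:ℤ))
        = (gb p (2 * N) i * p ^ T i * (z * (p ^ N)⁻¹) ^ i)
          * ((z ^ N)⁻¹ * p ^ (N * N) * (p ^ T N)⁻¹) := by
    intro i
    have hzpow : z ^ ((i:ℤ) - (N:ℤ)) = z ^ i * (z ^ N)⁻¹ := by
      rw [zpow_sub₀ hz, zpow_natCast, zpow_natCast, div_eq_mul_inv]
    have hppow : p ^ t ((i:ℤ) - (N:ℤ))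
        = p ^ T i * (p ^ (N * i))⁻¹ * p ^ (N * N) * (p ^ T N)⁻¹ := by
      rw [ht_id i N, zpow_sub₀ hp0, zpow_add₀ hp0, zpow_sub₀ hp0, zpow_natCast,
        zpow_natCast, zpow_natCast, zpow_natCast]
      field_simp
    have hxpow : (z * (p ^ N)⁻¹) ^ i = z ^ i * (p ^ (N * i))⁻¹ := by
      rw [mul_pow, inv_pow, ← pow_mul]
    rw [hzpow, hppow, hxpow]
    ring
  rw [Finset.sum_congr rfl (fun i _ => key i), ← Finset.sum_mul, ← hq, hsplit]
  have h1 : (z ^ N : ℂ) ≠ 0 := pow_ne_zero _ hz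
  have h2 : (p ^ T N : ℂ) ≠ 0 := pow_ne_zero _ hp0
  have h3 : (p ^ (N * N) : ℂ) ≠ 0 := pow_ne_zero _ hp0
  field_simp

lemma t_neg (n : ℤ) : t (-(n + 1)) = t n := by
  apply mul_left_cancel₀ (by norm_num : (2:ℤ) ≠ 0)
  rw [two_t, two_t]
  ring

lemma summable_bound {a s : ℝ} (ha0 : 0 < a) (ha : a < 1) (hs : 0 < s) :
    Summable (fun j : ℤ => a ^ t j * s ^ j) := by
  have hgen : ∀ c : ℝ, 0 < c → ∀ e : ℕ → ℤ,
      (∀ᶠ n in atTop, ∃ m : ℕ, n ≤ m ∧ e (n + 1) = e n + m) →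
      Summable (fun n : ℕ => a ^ e n * c ^ n) := by
    intro c hc e he
    refine summable_of_ratio_norm_eventually_le (r := 1/2) (by norm_num) ?_
    have h1 : Tendsto (fun n : ℕ => a ^ n * c) atTop (𝓝 0) := by
      simpa using (tendsto_pow_atTop_nhds_zero_of_lt_one ha0.le ha).mul_const c
    filter_upwards [he, h1.eventually (eventually_le_nhds (by norm_num : (0:ℝ) < 1/2))]
      with n hn h2
    obtain ⟨m, hm, hn⟩ := hn
    have hpos : ∀ k : ℕ, 0 < a ^ e k * c ^ k := by
      intro k
      have := zpow_pos ha0 (e k)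
      positivity
    rw [Real.norm_eq_abs, Real.norm_eq_abs, abs_of_pos (hpos _), abs_of_pos (hpos _)]
    rw [hn, zpow_add₀ (ne_of_gt ha0), pow_succ, zpow_natCast]
    have ham : a ^ m ≤ a ^ n := pow_le_pow_of_le_one ha0.le ha.le hm
    calc a ^ e n * a ^ m * (c ^ n * c) = (a ^ m * c) * (a ^ e n * c ^ n) := by ring
      _ ≤ (a ^ n * c) * (a ^ e n * c ^ n) := by
          have := hpos n
          have h3 : a ^ m * c ≤ a ^ n * c := mul_le_mul_of_nonneg_right ham hc.le
          exact mul_le_mul_of_nonneg_right h3 (le_of_lt this)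
      _ ≤ (1/2) * (a ^ e n * c ^ n) := mul_le_mul_of_nonneg_right h2 (le_of_lt (hpos n))
  apply Summable.of_nat_of_neg
  · refine hgen s hs (fun n => t n) ?_
    filter_upwards with n
    refine ⟨n + 1, by omega, ?_⟩
    push_cast
    rw [t_succ]
  · have : Summable (fun n : ℕ => a ^ t (-(n:ℤ)) * s⁻¹ ^ n) := by
      refine hgen s⁻¹ (by positivity) (fun n => t (-(n:ℤ))) ?_
      filter_upwards [eventually_ge_atTop 1] with n hn
      refine ⟨n, le_rfl, ?_⟩
      have h7 : t (-(n:ℤ)) = t ((n:ℤ) - 1) := by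
        rw [show -((n:ℤ)) = -(((n:ℤ) - 1) + 1) by ring, t_neg]
      have h8 : t ((n:ℤ)) = t ((n:ℤ) - 1) + (n:ℤ) := by
        have := t_succ ((n:ℤ) - 1)
        rwa [show ((n:ℤ) - 1 + 1) = (n:ℤ) by ring] at this
      have h9 : t (-(((n:ℕ):ℤ) + 1)) = t ((n:ℤ)) := t_neg _
      push_cast
      rw [h9, h8, h7]
    refine this.congr (fun n => ?_)
    rw [zpow_neg, inv_pow, zpow_natCast]

lemma P_neg_one_ne_zero {p : ℂ} (hp : ‖p‖ < 1) : P p (-1) ≠ 0 := by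
  refine P_ne_zero hp (fun k => ?_)
  intro h
  have heq : p ^ (k + 1) = (1:ℂ) := by linear_combination -h
  have hlt : ‖p ^ (k + 1)‖ < 1 := by
    rw [norm_pow]
    exact pow_lt_one₀ (norm_nonneg _) hp (by omega)
  rw [heq] at hlt
  simp at hlt

/-- Uniform bound on the Gaussian binomials. -/
lemma gb_bound {p : ℂ} (hp : ‖p‖ < 1) (hp0 : p ≠ 0) :
    ∃ M : ℝ, 0 < M ∧ ∀ N r : ℕ, ‖gb p N r‖ ≤ M := by
  set B := Real.exp (1 / (1 - ‖p‖)) with hB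
  have hBpos : 0 < B := Real.exp_pos _
  have hupper : ∀ N : ℕ, ‖Em p N‖ ≤ B :=
    fun N => Qm_norm_le hp N zero_le_one (by norm_num)
  have hEne : P p (-1) ≠ 0 := P_neg_one_ne_zero hp
  obtain ⟨N₀, hN₀⟩ : ∃ N₀, ∀ N ≥ N₀, ‖P p (-1)‖ / 2 ≤ ‖Em p N‖ := by
    have htd : Tendsto (fun N => ‖Em p N‖) atTop (𝓝 ‖P p (-1)‖) :=
      (tendsto_Qm hp (-1)).norm
    have hhalf : ‖P p (-1)‖ / 2 < ‖P p (-1)‖ := by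
      have : 0 < ‖P p (-1)‖ := norm_pos_iff.mpr hEne
      linarith
    exact eventually_atTop.mp (htd.eventually (eventually_ge_nhds hhalf))
  set lo : ℝ := min (‖P p (-1)‖ / 2)
    (((Finset.range (N₀ + 1)).image (fun n => ‖Em p n‖)).min'
      (by simp [Finset.image_nonempty])) with hlo
  have hlopos : 0 < lo := by
    apply lt_min
    · have : 0 < ‖P p (-1)‖ := norm_pos_iff.mpr hEne
      linarith
    · apply (Finset.lt_min'_iff _ _).mpr
      intro y hy
      obtain ⟨n, _, rfl⟩ := Finset.mem_image.mp hy
      exact norm_pos_iff.mpr (Em_ne_zero hp n)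
  have hlower : ∀ N : ℕ, lo ≤ ‖Em p N‖ := by
    intro N
    rcases le_or_gt N N₀ with h | h
    · refine le_trans (min_le_right _ _) ?_
      exact Finset.min'_le _ _ (Finset.mem_image.mpr ⟨N, Finset.mem_range.mpr (by omega), rfl⟩)
    · exact le_trans (min_le_left _ _) (hN₀ N (by omega))
  refine ⟨B / (lo * lo), by positivity, fun N r => ?_⟩
  rw [gb, norm_div, norm_mul]
  apply div_le_div₀ (by positivity) (hupper N) (by positivity)
  exact mul_le_mul (hlower r) (hlower (N - r)) hlopos.le (norm_nonneg _)

/-- The Jacobi triple product identity. -/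
lemma key_product {q : ℂ} (hq : 1 < ‖q‖) {z : ℂ} (hz : z ≠ 0) :
    theta q z = P q⁻¹ (-1) * (P q⁻¹ z * ((1 + z⁻¹) * P q⁻¹ z⁻¹)) := by
  have hq0 : q ≠ 0 := by
    intro h
    rw [h] at hq
    rw [norm_zero] at hq
    norm_num at hq
  set p := q⁻¹ with hpdef
  have hp0 : p ≠ 0 := inv_ne_zero hq0
  have hp : ‖p‖ < 1 := by
    rw [hpdef, norm_inv]
    exact inv_lt_one_of_one_lt₀ hq
  obtain ⟨M, hMpos, hM⟩ := gb_bound hp hp0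
  set E := P p (-1) with hEdef
  have hEne : E ≠ 0 := P_neg_one_ne_zero hp
  set f : ℕ → ℤ → ℂ := fun N j =>
    if j ∈ Finset.Icc (-(N:ℤ)) (N:ℤ) then gb p (2*N) (j + N).toNat * p ^ t j * z ^ j else 0
    with hf
  -- Step A : the tsum equals the finite product
  have hA : ∀ N, ∑' j : ℤ, f N j
      = Qm p N z * ∏ k ∈ Finset.range N, (1 + z⁻¹ * p ^ k) := by
    intro N
    rw [tsum_eq_sum (s := Finset.Icc (-(N:ℤ)) (N:ℤ))
      (fun j hj => by simp only [hf, if_neg hj]), ← star hp hp0 hz N]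
    refine Finset.sum_nbij' (fun j : ℤ => (j + N).toNat) (fun i : ℕ => (i:ℤ) - N)
      ?_ ?_ ?_ ?_ ?_
    · intro j hj
      rw [Finset.mem_Icc] at hj
      rw [Finset.mem_range]
      omega
    · intro i hi
      rw [Finset.mem_range] at hi
      rw [Finset.mem_Icc]
      omega
    · intro j hj
      rw [Finset.mem_Icc] at hj
      omega
    · intro i hi
      rw [Finset.mem_range] at hi
      omega
    · intro j hj
      have hcast : (((j + N).toNat : ℤ)) - (N:ℤ) = j := by
        rw [Finset.mem_Icc] at hj
        omega
      rw [hcast]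
      simp only [hf, if_pos hj]
  -- Step B : domination
  have hbound : ∀ N : ℕ, ∀ j : ℤ, ‖f N j‖ ≤ M * (‖p‖ ^ t j * ‖z‖ ^ j) := by
    intro N j
    have hnn : (0:ℝ) ≤ ‖p‖ ^ t j * ‖z‖ ^ j := by
      have h1 : (0:ℝ) ≤ ‖p‖ ^ t j := zpow_nonneg (norm_nonneg _) _
      have h2 : (0:ℝ) ≤ ‖z‖ ^ j := zpow_nonneg (norm_nonneg _) _
      positivity
    by_cases hj : j ∈ Finset.Icc (-(N:ℤ)) (N:ℤ)
    · simp only [hf, if_pos hj]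
      rw [norm_mul, norm_mul, norm_zpow, norm_zpow]
      calc ‖gb p (2*N) (j + (N:ℤ)).toNat‖ * ‖p‖ ^ t j * ‖z‖ ^ j
          = ‖gb p (2*N) (j + (N:ℤ)).toNat‖ * (‖p‖ ^ t j * ‖z‖ ^ j) := by ring
        _ ≤ M * (‖p‖ ^ t j * ‖z‖ ^ j) := mul_le_mul_of_nonneg_right (hM _ _) hnn
    · simp only [hf, if_neg hj, norm_zero]
      positivity
  have hsum : Summable (fun j : ℤ => M * (‖p‖ ^ t j * ‖z‖ ^ j)) :=
    (summable_bound (norm_pos_iff.mpr hp0) hp (norm_pos_iff.mpr hz)).mul_left M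
  -- pointwise limits
  have hEmt : Tendsto (fun N => Em p N) atTop (𝓝 E) := tendsto_Qm hp (-1)
  have hlim : ∀ j : ℤ, Tendsto (fun N => f N j) atTop
      (𝓝 ((E / (E * E)) * (p ^ t j * z ^ j))) := by
    intro j
    have h2N : Tendsto (fun N : ℕ => Em p (2 * N)) atTop (𝓝 E) :=
      hEmt.comp (tendsto_atTop_mono (fun n => by simp only [id_eq]; omega) tendsto_id)
    have hplus : Tendsto (fun N : ℕ => Em p (j + (N:ℤ)).toNat) atTop (𝓝 E) :=
      hEmt.comp (tendsto_atTop_mono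
        (fun n => (by omega : n - j.natAbs ≤ (j + (n:ℤ)).toNat))
        (tendsto_sub_atTop_nat _))
    have hminus : Tendsto (fun N : ℕ => Em p ((N:ℤ) - j).toNat) atTop (𝓝 E) :=
      hEmt.comp (tendsto_atTop_mono
        (fun n => (by omega : n - j.natAbs ≤ ((n:ℤ) - j).toNat))
        (tendsto_sub_atTop_nat _))
    have hgb : Tendsto (fun N => gb p (2*N) ((j + (N:ℤ)).toNat)) atTop
        (𝓝 (E / (E * E))) := by
      refine Tendsto.congr' ?_ (h2N.div (hplus.mul hminus) (mul_ne_zero hEne hEne))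
      filter_upwards [eventually_ge_atTop j.natAbs] with N hN
      have h1 : 2 * N - (j + (N:ℤ)).toNat = ((N:ℤ) - j).toNat := by omega
      simp only [Pi.div_apply]
      rw [gb, h1]
    have := hgb.mul_const (p ^ t j * z ^ j)
    refine Tendsto.congr' ?_ this
    filter_upwards [eventually_ge_atTop j.natAbs] with N hN
    have hjmem : j ∈ Finset.Icc (-(N:ℤ)) (N:ℤ) := by
      rw [Finset.mem_Icc]
      omega
    simp only [hf, if_pos hjmem]
    ring
  -- Step C : limit of the product side
  have hC : Tendsto (fun N => Qm p N z * ∏ k ∈ Finset.range N, (1 + z⁻¹ * p ^ k)) atTop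
      (𝓝 (P p z * ((1 + z⁻¹) * P p z⁻¹))) := by
    refine (tendsto_Qm hp z).mul ?_
    rw [← tendsto_add_atTop_iff_nat 1]
    have heq : ∀ N : ℕ, ∏ k ∈ Finset.range (N+1), (1 + z⁻¹ * p ^ k)
        = (1 + z⁻¹) * Qm p N z⁻¹ := by
      intro N
      rw [Finset.prod_range_succ']
      rw [show (1 + z⁻¹ * p ^ 0) = 1 + z⁻¹ by rw [pow_zero, mul_one]]
      rw [mul_comm]
      rfl
    exact Tendsto.congr (fun N => (heq N).symm) ((tendsto_Qm hp z⁻¹).const_mul (1+z⁻¹))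
  -- Tannery
  have hTan := tendsto_tsum_of_dominated_convergence hsum hlim
    (Eventually.of_forall hbound)
  have hEq : ∑' j : ℤ, (E / (E * E)) * (p ^ t j * z ^ j)
      = P p z * ((1 + z⁻¹) * P p z⁻¹) := by
    refine tendsto_nhds_unique ?_ hC
    exact hTan.congr (fun N => hA N)
  rw [tsum_mul_left] at hEq
  have hEE : E / (E * E) = E⁻¹ := by
    field_simp
  rw [hEE] at hEq
  have hth : theta q z = ∑' j : ℤ, p ^ t j * z ^ j := by
    rw [theta]
    refine tsum_congr (fun n => ?_)
    rw [theta_exp n, zpow_neg, ← inv_zpow]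
  rw [hth, ← hEq, ← mul_assoc, mul_inv_cancel₀ hEne, one_mul]

section Spiral

variable {q : ℂ} (hq : 1 < ‖q‖)

include hq in
lemma hq0 : q ≠ 0 := by
  intro h
  rw [h, norm_zero] at hq
  norm_num at hq

include hq in
lemma hp_lt : ‖q⁻¹‖ < 1 := by
  rw [norm_inv]
  exact inv_lt_one_of_one_lt₀ hq

include hq in
lemma one_sub_qzpow_ne {n : ℤ} (hn : n ≠ 0) : (1:ℂ) - q ^ n ≠ 0 := by
  intro h
  have h1 : q ^ n = 1 := by linear_combination -h
  have h2 : ‖q ^ n‖ = 1 := by rw [h1, norm_one]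
  rw [norm_zpow] at h2
  rcases lt_trichotomy n 0 with hn' | hn' | hn'
  · have : ‖q‖ ^ n < ‖q‖ ^ (0:ℤ) := zpow_lt_zpow_right₀ hq hn'
    rw [zpow_zero, h2] at this
    norm_num at this
  · exact hn hn'
  · have : ‖q‖ ^ (0:ℤ) < ‖q‖ ^ n := zpow_lt_zpow_right₀ hq hn'
    rw [zpow_zero, h2] at this
    norm_num at this

include hq in
lemma spiral_factor (a : ℤ) (k : ℕ) :
    1 + (-q ^ a) * q⁻¹ ^ (k + 1) = 1 - q ^ (a - (k + 1 : ℕ)) := by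
  have h1 : (q⁻¹ : ℂ) ^ (k + 1) = q ^ (-((k + 1 : ℕ) : ℤ)) := by
    rw [zpow_neg, zpow_natCast, ← inv_pow]
  have h2 : q ^ a * q ^ (-((k + 1 : ℕ) : ℤ)) = q ^ (a - ((k + 1 : ℕ) : ℤ)) := by
    rw [← zpow_add₀ (hq0 hq), sub_eq_add_neg]
  rw [h1]
  linear_combination -h2

include hq in
lemma P_spiral_ne {a : ℤ} (ha : a ≤ 0) : P q⁻¹ (-q ^ a) ≠ 0 := by
  refine P_ne_zero (hp_lt hq) (fun k => ?_)
  rw [spiral_factor hq a k]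
  exact one_sub_qzpow_ne hq (by omega)

include hq in
lemma P_spiral_eq_zero (k : ℕ) : P q⁻¹ (-q ^ ((k + 1 : ℕ) : ℤ)) = 0 := by
  refine P_eq_zero (hp_lt hq) (k := k) ?_
  rw [spiral_factor hq _ k]
  simp

lemma inv_spiral (m : ℤ) : (-q ^ m)⁻¹ = -q ^ (-m) := by
  rw [inv_neg, ← zpow_neg]

include hq in
lemma spiral_ne_zero (m : ℤ) : (-q ^ m : ℂ) ≠ 0 :=
  neg_ne_zero.mpr (zpow_ne_zero m (hq0 hq))

end Spiral

lemma theta_zero_iff {q : ℂ} (hq : 1 < ‖q‖) {z : ℂ} (hz : z ≠ 0) :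
    theta q z = 0 ↔ ∃ m : ℤ, z = -q ^ m := by
  have hp := hp_lt hq
  have hq0' := hq0 hq
  have hEne := P_neg_one_ne_zero hp
  have hpq : ∀ k : ℕ, (q⁻¹:ℂ) ^ (k+1) * q ^ (k+1) = 1 := by
    intro k
    rw [← mul_pow, inv_mul_cancel₀ hq0', one_pow]
  rw [key_product hq hz]
  constructor
  · intro h
    rcases mul_eq_zero.mp h with h | h
    · exact absurd h hEne
    rcases mul_eq_zero.mp h with h | h
    · have hnk : ¬ (∀ k : ℕ, 1 + z * q⁻¹ ^ (k+1) ≠ 0) := fun hk => (P_ne_zero hp hk) h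
      push_neg at hnk
      obtain ⟨k, hk⟩ := hnk
      refine ⟨((k+1 : ℕ) : ℤ), ?_⟩
      rw [zpow_natCast]
      calc z = z * ((q⁻¹:ℂ)^(k+1) * q^(k+1)) := by rw [hpq k, mul_one]
        _ = -q ^ (k+1) := by
            have h2 : z * (q⁻¹:ℂ)^(k+1) = -1 := by linear_combination hk
            rw [← mul_assoc, h2]
            ring
    rcases mul_eq_zero.mp h with h | h
    · refine ⟨0, ?_⟩
      have hzi : z⁻¹ = -1 := by linear_combination h
      have h3 : z = (z⁻¹)⁻¹ := (inv_inv z).symm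
      rw [h3, hzi]
      norm_num
    · have hnk : ¬ (∀ k : ℕ, 1 + z⁻¹ * q⁻¹ ^ (k+1) ≠ 0) := fun hk => (P_ne_zero hp hk) h
      push_neg at hnk
      obtain ⟨k, hk⟩ := hnk
      refine ⟨-((k+1 : ℕ) : ℤ), ?_⟩
      have hzi : z⁻¹ = -q^(k+1) := by
        calc z⁻¹ = z⁻¹ * ((q⁻¹:ℂ)^(k+1) * q^(k+1)) := by rw [hpq k, mul_one]
          _ = -q ^ (k+1) := by
              have h2 : z⁻¹ * (q⁻¹:ℂ)^(k+1) = -1 := by linear_combination hk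
              rw [← mul_assoc, h2]
              ring
      have h3 : z = (z⁻¹)⁻¹ := (inv_inv z).symm
      rw [h3, hzi, ← zpow_natCast q (k+1), inv_spiral]
  · rintro ⟨m, rfl⟩
    obtain ⟨k, hk | hk⟩ := Int.eq_nat_or_neg m
    · subst hk
      cases k with
      | zero =>
          rw [show ((-q ^ (((0:ℕ)):ℤ)) : ℂ) = -1 by norm_num]
          rw [show ((1:ℂ) + (-1:ℂ)⁻¹) = 0 by norm_num]
          ring
      | succ k' =>
          rw [P_spiral_eq_zero hq k']
          ring
    · subst hk
      cases k with
      | zero =>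
          rw [show ((-q ^ (-((0:ℕ):ℤ))) : ℂ) = -1 by norm_num]
          rw [show ((1:ℂ) + (-1:ℂ)⁻¹) = 0 by norm_num]
          ring
      | succ k' =>
          rw [show ((-q ^ (-(((k'+1):ℕ):ℤ))):ℂ)⁻¹ = -q ^ (((k'+1):ℕ):ℤ) by
            rw [inv_spiral, neg_neg]]
          rw [P_spiral_eq_zero hq k']
          ring

lemma theta_factor {q : ℂ} (hq : 1 < ‖q‖) (m : ℤ) :
    ∃ g : ℂ → ℂ, AnalyticAt ℂ g (-q ^ m) ∧ g (-q ^ m) ≠ 0 ∧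
      ∀ᶠ z in 𝓝 (-q ^ m : ℂ), theta q z = (z - (-q ^ m)) * g z := by
  have hp := hp_lt hq
  have hq0' := hq0 hq
  have hp0 : (q⁻¹ : ℂ) ≠ 0 := inv_ne_zero hq0'
  have hEne := P_neg_one_ne_zero hp
  have hz₀ : (-q ^ m : ℂ) ≠ 0 := spiral_ne_zero hq m
  have hPana : ∀ x : ℂ, AnalyticAt ℂ (P q⁻¹) x := (P_differentiable hp).analyticAt
  have hinv_ana : AnalyticAt ℂ (fun z : ℂ => z⁻¹) (-q ^ m) := analyticAt_id.inv hz₀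
  have hPinv_ana : AnalyticAt ℂ (fun z : ℂ => P q⁻¹ z⁻¹) (-q ^ m) :=
    (hPana _).comp hinv_ana
  have hzero_case : m = 0 → ∃ g : ℂ → ℂ, AnalyticAt ℂ g (-q ^ m) ∧ g (-q ^ m) ≠ 0 ∧
      ∀ᶠ z in 𝓝 (-q ^ m : ℂ), theta q z = (z - (-q ^ m)) * g z := by
    rintro rfl
    have hm1 : (-q ^ (0:ℤ) : ℂ) = -1 := by norm_num
    refine ⟨fun z => P q⁻¹ (-1) * (z⁻¹ * (P q⁻¹ z * P q⁻¹ z⁻¹)), ?_, ?_, ?_⟩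
    · exact analyticAt_const.mul (hinv_ana.mul ((hPana _).mul hPinv_ana))
    · rw [hm1]
      dsimp only
      rw [show ((-1:ℂ))⁻¹ = -1 by norm_num]
      simp only [ne_eq, mul_eq_zero]
      push_neg
      refine ⟨hEne, by norm_num, hEne, hEne⟩
    · rw [hm1]
      filter_upwards [eventually_ne_nhds (show (-1:ℂ) ≠ 0 by norm_num)] with z hz
      rw [key_product hq hz]
      linear_combination (-(P q⁻¹ (-1) * P q⁻¹ z * P q⁻¹ z⁻¹)) * (mul_inv_cancel₀ hz)
  obtain ⟨k, hk | hk⟩ := Int.eq_nat_or_neg m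
  · cases k with
    | zero => exact hzero_case (by rw [hk]; norm_num)
    | succ k' =>
        subst hk
        set a : ℤ := (((k' + 1) : ℕ) : ℤ) with ha
        have hfac0 : ∀ k'' : ℕ, k'' ≠ k' → 1 + (-q ^ a) * q⁻¹ ^ (k'' + 1) ≠ 0 := by
          intro k'' hk''
          rw [spiral_factor hq a k'']
          exact one_sub_qzpow_ne hq (by omega)
        obtain ⟨gP, hgPd, hgPne, hgPfac⟩ := P_factor hp k' (-q ^ a) hfac0
        have hpqz : (q⁻¹:ℂ) ^ (k' + 1) * q ^ a = 1 := by
          rw [ha, zpow_natCast, ← mul_pow, inv_mul_cancel₀ hq0', one_pow]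
        refine ⟨fun z => P q⁻¹ (-1) * (q⁻¹ ^ (k' + 1) *
          (gP z * ((1 + z⁻¹) * P q⁻¹ z⁻¹))), ?_, ?_, ?_⟩
        · exact analyticAt_const.mul (analyticAt_const.mul
            ((hgPd.analyticAt _).mul ((analyticAt_const.add hinv_ana).mul hPinv_ana)))
        · simp only [ne_eq, mul_eq_zero]
          push_neg
          refine ⟨hEne, pow_ne_zero _ hp0, hgPne, ?_, ?_⟩
          · rw [inv_spiral, ← sub_eq_add_neg]
            exact one_sub_qzpow_ne hq (by omega)
          · rw [inv_spiral]
            exact P_spiral_ne hq (by omega)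
        · filter_upwards [eventually_ne_nhds hz₀] with z hz
          rw [key_product hq hz, hgPfac z]
          linear_combination (-(P q⁻¹ (-1) * gP z * ((1 + z⁻¹) * P q⁻¹ z⁻¹))) * hpqz
  · cases k with
    | zero => exact hzero_case (by rw [hk]; norm_num)
    | succ k' =>
        subst hk
        set a : ℤ := (((k' + 1) : ℕ) : ℤ) with ha
        have hfac0 : ∀ k'' : ℕ, k'' ≠ k' → 1 + (-q ^ a) * q⁻¹ ^ (k'' + 1) ≠ 0 := by
          intro k'' hk''
          rw [spiral_factor hq a k'']
          exact one_sub_qzpow_ne hq (by omega)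
        obtain ⟨gP, hgPd, hgPne, hgPfac⟩ := P_factor hp k' (-q ^ a) hfac0
        have hz0inv : ((-q ^ (-a) : ℂ))⁻¹ = -q ^ a := by
          rw [inv_spiral, neg_neg]
        have hq_a : q ^ (-a) = (q⁻¹:ℂ) ^ (k' + 1) := by
          rw [ha, zpow_neg, zpow_natCast, inv_pow]
        refine ⟨fun z => P q⁻¹ (-1) * (P q⁻¹ z * ((1 + z⁻¹) * (z⁻¹ * gP z⁻¹))), ?_, ?_, ?_⟩
        · exact analyticAt_const.mul ((hPana _).mul ((analyticAt_const.add hinv_ana).mul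
            (hinv_ana.mul ((hgPd.analyticAt _).comp hinv_ana))))
        · simp only [ne_eq, mul_eq_zero]
          push_neg
          refine ⟨hEne, P_spiral_ne hq (by omega), ?_, inv_ne_zero hz₀, ?_⟩
          · rw [hz0inv, ← sub_eq_add_neg]
            exact one_sub_qzpow_ne hq (by omega)
          · rw [hz0inv]
            exact hgPne
        · filter_upwards [eventually_ne_nhds hz₀] with z hz
          rw [key_product hq hz, hgPfac z⁻¹]
          linear_combination (-(P q⁻¹ (-1) * P q⁻¹ z * (1 + z⁻¹) * gP z⁻¹)) *
              (mul_inv_cancel₀ hz)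
            + (-(P q⁻¹ (-1) * P q⁻¹ z * (1 + z⁻¹) * gP z⁻¹ * z⁻¹)) * hq_a

end ThetaAux

/-- For `|q| > 1`, the zeros of `Θ_q` on `ℂ*` are exactly the points of the `q`-spiral
`−q^ℤ`, and each zero has order `1` (i.e. near each such point, `Θ_q(z) = (z + q^m)·g(z)`
with `g` analytic and nonvanishing there). -/
theorem stmt2 (q : ℂ) (hq : 1 < ‖q‖) :
    (∀ z : ℂ, z ≠ 0 → (theta q z = 0 ↔ ∃ m : ℤ, z = -q ^ m)) ∧
    (∀ m : ℤ, ∃ g : ℂ → ℂ, AnalyticAt ℂ g (-q ^ m) ∧ g (-q ^ m) ≠ 0 ∧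
      ∀ᶠ z in nhds (-q ^ m : ℂ), theta q z = (z - (-q ^ m)) * g z) := by
  have hq' : 1 < ‖q‖ := hq
  exact ⟨fun z hz => ThetaAux.theta_zero_iff hq' hz, fun m => ThetaAux.theta_factor hq' m⟩
end

section
/- Let q ∈ ℂ with |q| > 1, p := 1/q, and α ∈ ℂ* with α ∉ −q^ℤ. The function y_{α,∞}(z) := ∏_{n=0}^∞ (1 − q^{-n}·α/(qz)) / Θ_q(qz) satisfies the p-difference equation y_{α,∞}(pz) = (z − α)·y_{α,∞}(z) for every z ∈ ℂ* at which both sides are defined, and it is of the form ĥ_∞(z)/Θ_q(qz) with ĥ_∞ analytic at ∞ and ĥ_∞(∞) = 1. -/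
set_option maxHeartbeats 1000000

/-- `y_{α,∞}(z) = ∏_{n≥0}(1 − q^{-n}·α/(qz)) / Θ_q(qz)`. -/
noncomputable def yinf (q α z : ℂ) : ℂ :=
  (∏' n : ℕ, ((1 : ℂ) - q ^ (-(n : ℤ)) * (α / (q * z)))) / theta q (q * z)

open Complex

/-- The functional equation `Θ_q(qz) = z·Θ_q(z)`. -/
lemma theta_funeq (q z : ℂ) (hq0 : q ≠ 0) (hz : z ≠ 0) :
    theta q (q * z) = z * theta q z := by
  have key : ∀ n : ℤ, -(n * (n + 1)) / 2 + n = -((n - 1) * n) / 2 := by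
    intro n
    have h1 : n * (n + 1) = n * n + n := by ring
    have h2 : (n - 1) * n = n * n - n := by ring
    obtain ⟨t, ht⟩ := Int.even_mul_succ_self n
    rw [h1, h2]
    rw [h1] at ht
    omega
  have step1 : theta q (q * z) = ∑' n : ℤ, q ^ (-((n - 1) * n) / 2) * z ^ n := by
    unfold theta
    refine tsum_congr fun n => ?_
    rw [mul_zpow, ← mul_assoc, ← zpow_add₀ hq0, key]
  rw [step1]
  have step2 : (∑' n : ℤ, q ^ (-((n - 1) * n) / 2) * z ^ n)
      = ∑' n : ℤ, q ^ (-((n + 1 - 1) * (n + 1)) / 2) * z ^ (n + 1) :=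
    ((Equiv.addRight (1 : ℤ)).tsum_eq fun n => q ^ (-((n - 1) * n) / 2) * z ^ n).symm
  rw [step2]
  unfold theta
  rw [← tsum_mul_left]
  refine tsum_congr fun n => ?_
  have : (n + 1 - 1) * (n + 1) = n * (n + 1) := by ring
  rw [this, zpow_add_one₀ hz]
  ring

lemma summable_log_aux (q c : ℂ) (hq : 1 < ‖q‖) :
    Summable fun n : ℕ => Complex.log (1 - q ^ (-(n : ℤ)) * c) := by
  have hq0 : q ≠ 0 := by
    intro h; rw [h] at hq; simp at hq; linarith
  have hlt : ‖q‖⁻¹ < 1 := by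
    rw [inv_lt_one_iff₀]; right; exact hq
  have hnorm : ∀ n : ℕ, ‖q ^ (-(n : ℤ)) * c‖ = ‖q‖⁻¹ ^ n * ‖c‖ := by
    intro n
    rw [norm_mul, norm_zpow, zpow_neg, zpow_natCast, inv_pow]
  have htend : Filter.Tendsto (fun n : ℕ => ‖q‖⁻¹ ^ n * ‖c‖) Filter.atTop (nhds 0) := by
    simpa using (tendsto_pow_atTop_nhds_zero_of_lt_one (by positivity) hlt).mul_const ‖c‖
  obtain ⟨N, hN⟩ :=
    (htend.eventually_lt_const (by norm_num : (0:ℝ) < 1/2)).exists_forall_of_atTop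
  rw [← summable_nat_add_iff N]
  apply Summable.of_norm_bounded
    (g := fun n : ℕ => (3 / 2 * (‖q‖⁻¹ ^ N * ‖c‖)) * ‖q‖⁻¹ ^ n)
    (((summable_geometric_of_lt_one (by positivity) hlt).mul_left _))
  intro n
  have hb : ‖q ^ (-((n + N : ℕ) : ℤ)) * c‖ ≤ 1 / 2 := by
    rw [hnorm]; exact (hN (n + N) (le_add_self)).le
  have := Complex.norm_log_one_add_half_le_self
    (z := -(q ^ (-((n + N : ℕ) : ℤ)) * c)) (by rwa [norm_neg])
  rw [← sub_eq_add_neg] at this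
  refine this.trans ?_
  rw [norm_neg, hnorm, pow_add]
  ring_nf
  nlinarith [pow_nonneg (inv_nonneg.2 (norm_nonneg q)) n,
    pow_nonneg (inv_nonneg.2 (norm_nonneg q)) N, norm_nonneg c]

lemma multipliable_aux (q c : ℂ) (hq : 1 < ‖q‖)
    (hne : ∀ n : ℕ, (1 : ℂ) - q ^ (-(n : ℤ)) * c ≠ 0) :
    Multipliable fun n : ℕ => (1 : ℂ) - q ^ (-(n : ℤ)) * c :=
  Complex.multipliable_of_summable_log (summable_log_aux q c hq)

/-- For `|q| > 1`, `p = 1/q`, `α ∈ ℂ*` with `α ∉ −q^ℤ`: `y_{α,∞}` satisfies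
`y_{α,∞}(pz) = (z − α)·y_{α,∞}(z)` wherever both sides are defined, and
`y_{α,∞}(z) = ĥ_∞(z)/Θ_q(qz)` with `ĥ_∞` analytic at `∞` and `ĥ_∞(∞) = 1`. -/
theorem stmt8 (q α : ℂ) (hq : 1 < ‖q‖) (hα : α ≠ 0)
    (hαs : ¬∃ m : ℤ, α = -q ^ m) :
    (∀ z : ℂ, z ≠ 0 →
      theta q (q * z) ≠ 0 → theta q (q * (q⁻¹ * z)) ≠ 0 →
      (∀ n : ℕ, (1 : ℂ) - q ^ (-(n : ℤ)) * (α / (q * z)) ≠ 0) →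
      (∀ n : ℕ, (1 : ℂ) - q ^ (-(n : ℤ)) * (α / (q * (q⁻¹ * z))) ≠ 0) →
      yinf q α (q⁻¹ * z) = (z - α) * yinf q α z) ∧
    (∃ h : ℂ → ℂ, AnalyticAt ℂ (fun w : ℂ => h w⁻¹) 0 ∧ h (0 : ℂ)⁻¹ = 1 ∧
      ∀ z : ℂ, yinf q α z = h z / theta q (q * z)) := by
  have hq0 : q ≠ 0 := by
    intro h; rw [h] at hq; simp at hq; linarith
  have hq1 : (1:ℝ) < ‖q‖ := hq
  constructor
  · -- Part 1: the p-difference equation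
    intro z hz h1 h2 hn hn'
    have hinv : q * (q⁻¹ * z) = z := mul_inv_cancel_left₀ hq0 z
    rw [hinv] at h2 hn'
    unfold yinf
    rw [hinv]
    have hfac : ∀ n : ℕ, (1 : ℂ) - q ^ (-((n + 1 : ℕ) : ℤ)) * (α / z)
        = 1 - q ^ (-(n : ℤ)) * (α / (q * z)) := by
      intro n
      congr 1
      push_cast
      rw [show -((n : ℤ) + 1) = -(n : ℤ) + (-1) by ring, zpow_add₀ hq0, zpow_neg_one]
      field_simp
    have hmulP : Multipliable fun n : ℕ => (1 : ℂ) - q ^ (-(n : ℤ)) * (α / (q * z)) :=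
      multipliable_aux q _ hq hn
    have hshift : Multipliable fun n : ℕ => (1 : ℂ) - q ^ (-((n + 1 : ℕ) : ℤ)) * (α / z) :=
      hmulP.congr fun n => (hfac n).symm
    have hsplit : (∏' n : ℕ, ((1 : ℂ) - q ^ (-(n : ℤ)) * (α / z)))
        = (1 - α / z) * ∏' n : ℕ, ((1 : ℂ) - q ^ (-(n : ℤ)) * (α / (q * z))) := by
      rw [tprod_eq_zero_mul' (f := fun n : ℕ => (1:ℂ) - q ^ (-(n:ℤ)) * (α / z)) hshift]
      congr 1
      · norm_num
      · exact tprod_congr hfac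
    rw [hsplit, theta_funeq q z hq0 hz]
    have hT : theta q z ≠ 0 := h2
    field_simp
  · -- Part 2: analyticity at infinity
    refine ⟨fun z => ∏' n : ℕ, ((1 : ℂ) - q ^ (-(n : ℤ)) * (α / (q * z))), ?_, ?_, fun z => rfl⟩
    · -- AnalyticAt at 0 of w ↦ h w⁻¹
      have hrw : (fun w : ℂ => ∏' n : ℕ, ((1 : ℂ) - q ^ (-(n : ℤ)) * (α / (q * w⁻¹))))
          = fun w : ℂ => ∏' n : ℕ, ((1 : ℂ) - q ^ (-(n : ℤ)) * (α * w / q)) := by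
        funext w
        refine tprod_congr fun n => ?_
        rcases eq_or_ne w 0 with rfl | hw
        · simp
        · congr 2
          field_simp
      rw [hrw]
      set r : ℝ := ‖q‖ / (2 * (‖α‖ + 1)) with hr
      have hrpos : 0 < r := by positivity
      set U : Set ℂ := Metric.ball 0 r with hU
      have hUopen : IsOpen U := Metric.isOpen_ball
      have h0U : (0:ℂ) ∈ U := Metric.mem_ball_self hrpos
      have hlt : ‖q‖⁻¹ < 1 := by rw [inv_lt_one_iff₀]; right; exact hq1
      have hzpow1 : ∀ n : ℕ, ‖q ^ (-(n : ℤ))‖ ≤ 1 := by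
        intro n
        rw [norm_zpow, zpow_neg, zpow_natCast]
        rw [inv_le_one_iff₀]
        right
        exact one_le_pow₀ hq1.le
      have hb2 : ∀ w ∈ U, ‖α * w / q‖ < 1 / 2 := by
        intro w hw
        have hwn : ‖w‖ < r := by simpa [U] using hw
        rw [norm_div, norm_mul]
        rw [div_lt_iff₀ (by linarith)]
        calc ‖α‖ * ‖w‖ ≤ ‖α‖ * ‖w‖ := le_refl _
          _ < (‖α‖ + 1) * r := by
              apply mul_lt_mul' (by linarith) hwn (norm_nonneg w) (by positivity)
          _ = ‖q‖ / 2 := by rw [hr]; field_simp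
          _ = 1 / 2 * ‖q‖ := by ring
      have hbound : ∀ n : ℕ, ∀ w ∈ U, ‖q ^ (-(n : ℤ)) * (α * w / q)‖ < 1 / 2 := by
        intro n w hw
        calc ‖q ^ (-(n : ℤ)) * (α * w / q)‖ = ‖q ^ (-(n : ℤ))‖ * ‖α * w / q‖ := norm_mul _ _
          _ ≤ 1 * ‖α * w / q‖ := mul_le_mul_of_nonneg_right (hzpow1 n) (norm_nonneg _)
          _ < 1 / 2 := by rw [one_mul]; exact hb2 w hw
      have hne : ∀ n : ℕ, ∀ w ∈ U, (1 : ℂ) - q ^ (-(n : ℤ)) * (α * w / q) ≠ 0 := by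
        intro n w hw
        rw [sub_eq_add_neg]
        exact slitPlane_ne_zero
          (mem_slitPlane_of_norm_lt_one (by rw [norm_neg]; linarith [hbound n w hw]))
      set L : ℂ → ℂ := fun w => ∑' n : ℕ, Complex.log (1 - q ^ (-(n : ℤ)) * (α * w / q)) with hL
      have hgeom : Summable fun n : ℕ => (3/2 : ℝ) * ‖q‖⁻¹ ^ n :=
        (summable_geometric_of_lt_one (by positivity) hlt).mul_left _
      have hDL : DifferentiableOn ℂ L U := by
        apply differentiableOn_tsum_of_summable_norm hgeom _ hUopen
        · intro n w hw
          have h := Complex.norm_log_one_add_half_le_self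
            (z := -(q ^ (-(n : ℤ)) * (α * w / q))) (by rw [norm_neg]; linarith [hbound n w hw])
          rw [← sub_eq_add_neg] at h
          refine h.trans ?_
          rw [norm_neg]
          have : ‖q ^ (-(n : ℤ)) * (α * w / q)‖ ≤ ‖q‖⁻¹ ^ n * 1 := by
            rw [norm_mul, norm_zpow, zpow_neg, zpow_natCast, ← inv_pow]
            apply mul_le_mul_of_nonneg_left _ (by positivity)
            linarith [hb2 w hw]
          nlinarith [pow_nonneg (inv_nonneg.2 (norm_nonneg q)) n]
        · intro n
          apply DifferentiableOn.clog
          · fun_prop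
          · intro w hw
            rw [sub_eq_add_neg]
            exact mem_slitPlane_of_norm_lt_one (by rw [norm_neg]; linarith [hbound n w hw])
      have hsum : ∀ w ∈ U, Summable fun n : ℕ =>
          Complex.log (1 - q ^ (-(n : ℤ)) * (α * w / q)) := by
        intro w hw
        exact summable_log_aux q (α * w / q) hq
      have hEq : Set.EqOn (fun w : ℂ => ∏' n : ℕ, ((1 : ℂ) - q ^ (-(n : ℤ)) * (α * w / q)))
          (fun w => Complex.exp (L w)) U := by
        intro w hw
        have hp := (hsum w hw).hasSum.cexp
        rw [show (cexp ∘ fun n : ℕ => Complex.log (1 - q ^ (-(n : ℤ)) * (α * w / q)))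
            = fun n : ℕ => (1 : ℂ) - q ^ (-(n : ℤ)) * (α * w / q) from
          funext fun n => Complex.exp_log (hne n w hw)] at hp
        exact hp.tprod_eq
      have hG : DifferentiableOn ℂ
          (fun w : ℂ => ∏' n : ℕ, ((1 : ℂ) - q ^ (-(n : ℤ)) * (α * w / q))) U :=
        ((Complex.differentiable_exp.comp_differentiableOn hDL)).congr hEq
      exact hG.analyticAt (hUopen.mem_nhds h0U)
    · -- value at ∞ is 1
      simp
end

section
/- Let q ∈ ℂ with |q| > 1 and ν ∈ ℕ*. Let B ∈ GL_ν(ℂ) with Jordan decomposition B = P(DU)P^{-1}, where P ∈ GL_ν(ℂ), D = Diag(d_1, …, d_ν) is diagonal with all d_i ∈ ℂ*, U is a unipotent upper triangular matrix, and DU = UD. Define log(U) := Σ_{k≥1} (−1)^{k+1}(U − I)^k / k (a finite sum, since U − I is nilpotent) and Λ_{q,B}(z) := P·(Diag(Λ_{q,d_1}(z), …, Λ_{q,d_ν}(z))·exp(log(U)·l_q(z)))·P^{-1}. Then for every z ∈ ℂ* at which Λ_{q,B}(z) and Λ_{q,B}(qz) are defined, Λ_{q,B}(qz) = B·Λ_{q,B}(z)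 = Λ_{q,B}(z)·B. -/
set_option maxRecDepth 8000

/-- `Λ_{q,a}(z) = Θ_q(z) / Θ_q(z/a)`. -/
noncomputable def lam (q a z : ℂ) : ℂ := theta q z / theta q (z / a)

/-- `l_q(z) = z·Θ_q′(z)/Θ_q(z)`. -/
noncomputable def lq (q z : ℂ) : ℂ := z * deriv (theta q) z / theta q z


lemma exp_arith (n : ℤ) : -((n+1) * ((n+1) + 1)) / 2 + (n + 1) = -(n * (n + 1)) / 2 := by
  obtain ⟨m, hm⟩ := Int.even_mul_succ_self n
  have h1 : -(n * (n + 1)) = 2 * (-m) := by rw [hm]; ring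
  have h2 : -((n+1) * ((n+1) + 1)) = 2 * (-(m + n + 1)) := by
    have : (n+1) * ((n+1) + 1) = n * (n+1) + 2 * (n+1) := by ring
    rw [this, hm]; ring
  rw [h1, h2, Int.mul_ediv_cancel_left _ two_ne_zero, Int.mul_ediv_cancel_left _ two_ne_zero]
  ring

open Filter in
lemma ratio_summable {f : ℕ → ℝ} (hf : ∀ n, 0 ≤ f n)
    (h : ∀ᶠ n in atTop, f (n + 1) ≤ (1/2) * f n) : Summable f := by
  apply summable_of_ratio_norm_eventually_le (r := 1/2) (by norm_num)
  filter_upwards [h] with n hn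
  rw [Real.norm_of_nonneg (hf _), Real.norm_of_nonneg (hf _)]
  exact hn

open Filter in
lemma nat_side (Q ρ : ℝ) (hQ : 1 < Q) (hρ : 0 < ρ) (e : ℕ → ℤ)
    (he : ∀ n, e (n + 1) ≤ e n - n) :
    Summable (fun n : ℕ => Q ^ (e n) * ((n : ℝ) + 1) * ρ ^ (n : ℤ)) := by
  have hQ0 : (0 : ℝ) < Q := lt_trans one_pos hQ
  apply ratio_summable
  · intro n
    positivity
  · have htend : Tendsto (fun n : ℕ => Q ^ n) atTop atTop :=
      tendsto_pow_atTop_atTop_of_one_lt hQ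
    obtain ⟨N, hN⟩ := (htend.eventually_ge_atTop (4 * ρ)).exists_forall_of_atTop
    rw [eventually_atTop]
    refine ⟨N, fun n hn => ?_⟩
    have h4 : 4 * ρ ≤ Q ^ n := hN n hn
    have step1 : Q ^ (e (n + 1)) ≤ Q ^ (e n - n) := zpow_le_zpow_right₀ hQ.le (he n)
    have hzn : (0:ℝ) < ρ ^ (n : ℤ) := zpow_pos hρ _
    have hze : (0:ℝ) < Q ^ (e n) := zpow_pos hQ0 _
    have key : Q ^ (e n - (n:ℤ)) * ((n : ℝ) + 1 + 1) * ρ ^ ((n : ℤ) + 1)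
        ≤ 1/2 * (Q ^ (e n) * ((n : ℝ) + 1) * ρ ^ (n : ℤ)) := by
      rw [zpow_sub₀ (ne_of_gt hQ0), zpow_add₀ (ne_of_gt hρ), zpow_one, zpow_natCast]
      rw [div_mul_eq_mul_div, div_mul_eq_mul_div, div_le_iff₀ (by positivity)]
      have hn0 : (0:ℝ) ≤ (n:ℝ) := Nat.cast_nonneg n
      nlinarith [mul_pos hze hzn, mul_nonneg (mul_nonneg hze.le hzn.le) hn0,
        mul_le_mul_of_nonneg_left h4 (mul_nonneg (mul_nonneg hze.le hzn.le) hn0),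
        mul_le_mul_of_nonneg_left h4 (mul_nonneg hze.le hzn.le)]
    have cast1 : ((n + 1 : ℕ) : ℝ) = (n : ℝ) + 1 := by push_cast; ring
    have cast2 : ((n + 1 : ℕ) : ℤ) = (n : ℤ) + 1 := by push_cast; ring
    rw [cast1, cast2]
    calc Q ^ (e (n + 1)) * ((n : ℝ) + 1 + 1) * ρ ^ ((n : ℤ) + 1)
        ≤ Q ^ (e n - (n:ℤ)) * ((n : ℝ) + 1 + 1) * ρ ^ ((n : ℤ) + 1) := by
          apply mul_le_mul_of_nonneg_right (mul_le_mul_of_nonneg_right step1 (by positivity))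
            (le_of_lt (zpow_pos hρ _))
      _ ≤ 1/2 * (Q ^ (e n) * ((n : ℝ) + 1) * ρ ^ (n : ℤ)) := key

lemma exp_arith' (n : ℤ) : -((n + 1) * ((n + 1) + 1)) / 2 = -(n * (n + 1)) / 2 - (n + 1) := by
  have := exp_arith n
  omega

lemma exp_arith_neg (m : ℤ) : -((-(m + 1)) * (-(m + 1) + 1)) / 2 = -((-m) * (-m + 1)) / 2 - m := by
  obtain ⟨k, hk⟩ := Int.even_mul_succ_self m
  have h1 : -((-(m + 1)) * (-(m + 1) + 1)) = 2 * (-k) := by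
    have : (-(m + 1)) * (-(m + 1) + 1) = m * (m + 1) := by ring
    rw [this, hk]; ring
  have h2 : -((-m) * (-m + 1)) = 2 * (m - k) := by
    have : (-m) * (-m + 1) = m * (m + 1) - 2 * m := by ring
    rw [this, hk]; ring
  rw [h1, h2, Int.mul_ediv_cancel_left _ two_ne_zero, Int.mul_ediv_cancel_left _ two_ne_zero]
  ring

lemma summable_main (q : ℂ) (hq : 1 < ‖q‖) (ρ : ℝ) (hρ : 0 < ρ) :
    Summable (fun n : ℤ => ‖q‖ ^ (-(n * (n + 1)) / 2) * ((|n| : ℝ) + 1) * ρ ^ n) := by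
  have hQ : (1:ℝ) < ‖q‖ := hq
  apply Summable.of_nat_of_neg
  · apply Summable.congr (nat_side (‖q‖) ρ hQ hρ
      (fun n : ℕ => -((n : ℤ) * ((n : ℤ) + 1)) / 2) ?_)
    · intro n
      simp
    · intro n
      have h := exp_arith' (n : ℤ)
      push_cast
      rw [h]
      set t := -((n:ℤ) * ((n:ℤ) + 1)) / 2
      linarith
  · apply Summable.congr (nat_side (‖q‖) ρ⁻¹ hQ (inv_pos.mpr hρ)
      (fun n : ℕ => -((-(n:ℤ)) * (-(n:ℤ) + 1)) / 2) ?_)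
    · intro n
      have h2 : ρ⁻¹ ^ ((n:ℤ)) = ρ ^ (-(n:ℤ)) := by
        rw [zpow_neg, ← inv_zpow]
      simp only [h2]
      simp
    · intro n
      have h := exp_arith_neg (n : ℤ)
      push_cast
      rw [h]

lemma summable_shift (q : ℂ) (hq : 1 < ‖q‖) (ρ : ℝ) (hρ : 0 < ρ) :
    Summable (fun n : ℤ =>
      ‖q‖ ^ (-(n * (n + 1)) / 2) * ((|n| : ℝ) + 1) * ρ ^ (n - 1)) := by
  apply Summable.congr ((summable_main q hq ρ hρ).mul_left ρ⁻¹)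
  intro n
  rw [zpow_sub₀ (ne_of_gt hρ), zpow_one]
  field_simp

lemma zpow_bound {a b x : ℝ} (ha : 0 < a) (h1 : a ≤ x) (h2 : x ≤ b) (n : ℤ) :
    x ^ n ≤ a ^ n + b ^ n := by
  have hx : 0 < x := lt_of_lt_of_le ha h1
  have hb : 0 < b := lt_of_lt_of_le hx h2
  rcases le_or_gt 0 n with hn | hn
  · obtain ⟨m, rfl⟩ := Int.eq_ofNat_of_zero_le hn
    have : x ^ (m : ℤ) ≤ b ^ (m : ℤ) := by
      rw [zpow_natCast, zpow_natCast]
      exact pow_le_pow_left₀ hx.le h2 m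
    have ha' : (0:ℝ) < a ^ (m : ℤ) := zpow_pos ha _
    linarith
  · obtain ⟨m, rfl⟩ := Int.exists_eq_neg_ofNat hn.le
    have hax : a ^ (m:ℕ) ≤ x ^ (m:ℕ) := pow_le_pow_left₀ ha.le h1 m
    have : x ^ (-(m:ℤ)) ≤ a ^ (-(m:ℤ)) := by
      rw [zpow_neg, zpow_neg, zpow_natCast, zpow_natCast]
      exact inv_anti₀ (pow_pos ha m) hax
    have hb' : (0:ℝ) < b ^ (-(m:ℤ)) := zpow_pos hb _
    linarith

lemma theta_hasDerivAt (q : ℂ) (hq : 1 < ‖q‖) (z : ℂ) (hz : z ≠ 0) :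
    HasDerivAt (theta q)
      (∑' n : ℤ, q ^ (-(n * (n + 1)) / 2) * ((n : ℂ) * z ^ (n - 1))) z := by
  have hz0 : 0 < ‖z‖ := by
    simpa [norm_pos_iff] using hz
  have habs : ∀ w : ℂ, ‖w‖ = ‖w‖ := fun w => rfl
  set r : ℝ := ‖z‖ / 2 with hr
  have hr0 : 0 < r := by positivity
  set t : Set ℂ := Metric.ball z r with ht
  have hmem : ∀ y ∈ t, r ≤ ‖y‖ ∧ ‖y‖ ≤ 3 * r := by
    intro y hy
    rw [ht, Metric.mem_ball, Complex.dist_eq, habs] at hy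
    rw [habs y]
    have t1 : ‖z‖ - ‖y‖ ≤ ‖z - y‖ := norm_sub_norm_le z y
    have t2 : ‖y‖ - ‖z‖ ≤ ‖y - z‖ := norm_sub_norm_le y z
    rw [norm_sub_rev] at t1
    have hz' : ‖z‖ = ‖z‖ := habs z
    constructor <;> linarith [hr, hz']
  have hy0 : ∀ y ∈ t, y ≠ 0 := by
    intro y hy h0
    have := (hmem y hy).1
    rw [h0] at this
    simp at this
    linarith
  set u : ℤ → ℝ := fun n => ‖q‖ ^ (-(n * (n + 1)) / 2) * ((|n| : ℝ) + 1)
      * (r ^ (n - 1) + (3 * r) ^ (n - 1)) with hu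
  have hu_sum : Summable u := by
    have h1 := summable_shift q hq r hr0
    have h2 := summable_shift q hq (3 * r) (by positivity)
    apply Summable.congr (h1.add h2)
    intro n
    rw [hu]
    ring
  have e1 : ∀ k : ℤ, ‖q ^ k‖ = ‖q‖ ^ k := by
    intro k
    rw [norm_zpow]
  have key := hasDerivAt_tsum_of_isPreconnected hu_sum Metric.isOpen_ball
    (g := fun (n : ℤ) (y : ℂ) => q ^ (-(n * (n + 1)) / 2) * y ^ n)
    (g' := fun (n : ℤ) (y : ℂ) => q ^ (-(n * (n + 1)) / 2) * ((n : ℂ) * y ^ (n - 1)))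
    ((convex_ball z r).isPreconnected)
    (fun n y hy => ((hasDerivAt_zpow n y (Or.inl (hy0 y hy))).const_mul _))
    (fun n y hy => ?_) (Metric.mem_ball_self hr0) ?_ (Metric.mem_ball_self hr0)
  · exact key
  · -- norm bound
    have hy := hmem y hy
    have e2 : ‖(n : ℂ)‖ ≤ (|n| : ℝ) + 1 := by
      have : ‖(n : ℂ)‖ = ((|n| : ℤ) : ℝ) := by
        rw [Complex.norm_intCast, Int.cast_abs]
      rw [this]
      push_cast
      linarith
    have e3 : ‖y ^ (n - 1)‖ ≤ r ^ (n - 1) + (3 * r) ^ (n - 1) := by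
      rw [norm_zpow, ← habs]
      exact zpow_bound hr0 hy.1 hy.2 _
    have e0 : ‖q ^ (-(n * (n + 1)) / 2) * ((n : ℂ) * y ^ (n - 1))‖
        = ‖q‖ ^ (-(n * (n + 1)) / 2) * (‖(n : ℂ)‖ * ‖y ^ (n - 1)‖) := by
      rw [norm_mul, norm_mul, e1]
    refine le_trans (le_of_eq e0) ?_
    show _ ≤ ‖q‖ ^ (-(n * (n + 1)) / 2) * ((|n| : ℝ) + 1)
      * (r ^ (n - 1) + (3 * r) ^ (n - 1))
    rw [mul_assoc]
    have hQ0 : (0:ℝ) < ‖q‖ := by linarith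
    exact mul_le_mul_of_nonneg_left
      (mul_le_mul e2 e3 (norm_nonneg _) (by positivity)) (zpow_pos hQ0 _).le
  · -- summability at z
    apply Summable.of_norm_bounded (summable_main q hq ‖z‖ hz0)
    intro n
    rw [norm_mul, e1, norm_zpow, ← habs]
    have h0 : (0:ℝ) ≤ (|n| : ℝ) := by positivity
    have h1 : (1:ℝ) ≤ (|n| : ℝ) + 1 := by linarith
    have hQ0 : (0:ℝ) < ‖q‖ := by linarith
    calc ‖q‖ ^ (-(n * (n + 1)) / 2) * ‖z‖ ^ n
        = ‖q‖ ^ (-(n * (n + 1)) / 2) * 1 * ‖z‖ ^ n := by ring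
      _ ≤ ‖q‖ ^ (-(n * (n + 1)) / 2) * ((|n| : ℝ) + 1) * ‖z‖ ^ n := by
          exact mul_le_mul_of_nonneg_right (mul_le_mul_of_nonneg_left h1
            (zpow_pos hQ0 _).le) (zpow_pos hz0 _).le

lemma theta_q_mul (q z : ℂ) (hq : q ≠ 0) (hz : z ≠ 0) :
    theta q (q * z) = z * theta q z := by
  unfold theta
  have key : ∀ n : ℤ, q ^ (-(n * (n + 1)) / 2) * (q * z) ^ n
      = q ^ (-(n * (n + 1)) / 2 + n) * z ^ n := by
    intro n
    rw [mul_zpow, zpow_add₀ hq]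
    ring
  simp_rw [key]
  have := (Equiv.addRight (1 : ℤ)).tsum_eq
    (fun n : ℤ => q ^ (-(n * (n + 1)) / 2 + n) * z ^ n)
  rw [← this]
  have key2 : ∀ n : ℤ, q ^ (-((n+1) * ((n+1) + 1)) / 2 + (n+1)) * z ^ (n+1)
      = z * (q ^ (-(n * (n + 1)) / 2) * z ^ n) := by
    intro n
    rw [exp_arith, zpow_add₀ hz, zpow_one]
    ring
  calc ∑' n : ℤ, q ^ (-((Equiv.addRight (1:ℤ)) n * ((Equiv.addRight (1:ℤ)) n + 1)) / 2 + (Equiv.addRight (1:ℤ)) n) * z ^ ((Equiv.addRight (1:ℤ)) n)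
      = ∑' n : ℤ, z * (q ^ (-(n * (n + 1)) / 2) * z ^ n) := by
        apply tsum_congr; intro n
        simpa using key2 n
    _ = z * ∑' n : ℤ, q ^ (-(n * (n + 1)) / 2) * z ^ n := tsum_mul_left

lemma lam_shift (q a z : ℂ) (hq0 : q ≠ 0) (ha : a ≠ 0) (hz : z ≠ 0)
    (hθa : theta q (z / a) ≠ 0) : lam q a (q * z) = a * lam q a z := by
  unfold lam
  rw [show q * z / a = q * (z / a) by ring, theta_q_mul q z hq0 hz,
    theta_q_mul q (z / a) hq0 (div_ne_zero hz ha)]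
  field_simp

lemma lq_shift (q z : ℂ) (hq : 1 < ‖q‖) (hz : z ≠ 0)
    (hθ : theta q z ≠ 0) : lq q (q * z) = lq q z + 1 := by
  have hq0 : q ≠ 0 := by
    intro h
    rw [h] at hq
    simp at hq
    linarith
  have Hz := theta_hasDerivAt q hq z hz
  have Hqz := theta_hasDerivAt q hq (q * z) (mul_ne_zero hq0 hz)
  set Dz := ∑' n : ℤ, q ^ (-(n * (n + 1)) / 2) * ((n : ℂ) * z ^ (n - 1)) with hDz
  set Dqz := ∑' n : ℤ, q ^ (-(n * (n + 1)) / 2) * ((n : ℂ) * (q * z) ^ (n - 1)) with hDqz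
  have hmul : HasDerivAt (fun w => w * q) q z := by
    simpa using (hasDerivAt_id z).mul_const q
  have hmul' : HasDerivAt (fun w => q * w) q z := by
    simpa [mul_comm] using hmul
  have Hg : HasDerivAt (fun w => theta q (q * w)) (Dqz * q) z := by
    exact HasDerivAt.comp z Hqz hmul'
  have Hh : HasDerivAt (fun w => w * theta q w) (1 * theta q z + z * Dz) z :=
    (hasDerivAt_id z).mul Hz
  have heq : (fun w => theta q (q * w)) =ᶠ[nhds z] (fun w => w * theta q w) := by
    filter_upwards [eventually_ne_nhds hz] with w hw
    exact theta_q_mul q w hq0 hw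
  have Hg2 : HasDerivAt (fun w => theta q (q * w)) (1 * theta q z + z * Dz) z :=
    Hh.congr_of_eventuallyEq heq
  have huniq : Dqz * q = 1 * theta q z + z * Dz := Hg.unique Hg2
  unfold lq
  rw [theta_q_mul q z hq0 hz, Hqz.deriv, Hz.deriv]
  rw [div_add' _ _ _ hθ, div_eq_div_iff (mul_ne_zero hz hθ) hθ]
  ring_nf
  linear_combination (z * theta q z) * huniq


open Polynomial in
lemma strict_tri_pow {ν : ℕ} (N : Matrix (Fin ν) (Fin ν) ℂ)
    (hN : ∀ i j : Fin ν, (j : ℕ) ≤ (i : ℕ) → N i j = 0) :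
    N ^ ν = 0 := by
  have key : ∀ k : ℕ, ∀ i j : Fin ν, (j : ℕ) < (i : ℕ) + k → (N ^ k) i j = 0 := by
    intro k
    induction k with
    | zero =>
      intro i j hij
      rw [pow_zero]
      have hij' : i ≠ j := by
        intro h; rw [h] at hij; omega
      exact Matrix.one_apply_ne hij'
    | succ k ih =>
      intro i j hij
      rw [pow_succ, Matrix.mul_apply]
      apply Finset.sum_eq_zero
      intro l _
      rcases lt_or_ge (l : ℕ) ((i : ℕ) + k) with h | h
      · rw [ih i l h, zero_mul]
      · rw [hN l j (by omega), mul_zero]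
  ext i j
  rw [key ν i j (by omega)]
  simp

lemma exp_nilpotent_eq_sum {ν m : ℕ} (M : Matrix (Fin ν) (Fin ν) ℂ) (hM : M ^ m = 0) :
    NormedSpace.exp M = ∑ k ∈ Finset.range m, ((k.factorial : ℂ)⁻¹) • M ^ k := by
  letI : SeminormedRing (Matrix (Fin ν) (Fin ν) ℂ) := Matrix.linftyOpSemiNormedRing
  letI : NormedRing (Matrix (Fin ν) (Fin ν) ℂ) := Matrix.linftyOpNormedRing
  letI : NormedAlgebra ℂ (Matrix (Fin ν) (Fin ν) ℂ) := Matrix.linftyOpNormedAlgebra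
  rw [NormedSpace.exp_eq_tsum ℂ]
  apply tsum_eq_sum
  intro k hk
  rw [Finset.mem_range, not_lt] at hk
  have : M ^ k = 0 := by
    rw [← Nat.sub_add_cancel hk, pow_add, hM, mul_zero]
  rw [this, smul_zero]

open Polynomial

noncomputable def Lpoly (m : ℕ) : ℂ[X] :=
  ∑ k ∈ Finset.Icc 1 m, C ((-1 : ℂ) ^ (k + 1) / k) * X ^ k

noncomputable def Gpoly (m : ℕ) : ℂ[X] :=
  ∑ n ∈ Finset.range m, C ((n.factorial : ℂ)⁻¹) * (Lpoly m) ^ n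

lemma X_dvd_Lpoly (m : ℕ) : (X : ℂ[X]) ∣ Lpoly m := by
  apply Finset.dvd_sum
  intro k hk
  rw [Finset.mem_Icc] at hk
  exact Dvd.dvd.mul_left (dvd_pow_self X (by omega)) _

lemma deriv_Lpoly (m : ℕ) : (1 + X) * derivative (Lpoly m) = 1 - (-X) ^ m := by
  have h1 : derivative (Lpoly m) = ∑ j ∈ Finset.range m, (-X : ℂ[X]) ^ j := by
    unfold Lpoly
    rw [derivative_sum]
    have step : ∀ k ∈ Finset.Icc 1 m,
        derivative (C ((-1 : ℂ) ^ (k + 1) / k) * X ^ k) = (- X : ℂ[X]) ^ (k - 1) := by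
      intro k hk
      rw [Finset.mem_Icc] at hk
      rw [derivative_C_mul, derivative_X_pow, ← mul_assoc, ← map_mul]
      have hk0 : (k : ℂ) ≠ 0 := Nat.cast_ne_zero.mpr (by omega)
      rw [div_mul_cancel₀ _ hk0]
      have h2 : (-1 : ℂ) ^ (k + 1) = (-1 : ℂ) ^ (k - 1) := by
        obtain ⟨j, rfl⟩ : ∃ j, k = j + 1 := ⟨k - 1, by omega⟩
        simp [pow_succ, pow_add]
      rw [h2, neg_pow, map_mul, map_pow, map_neg, map_one]
      rw [one_pow, C_1, mul_one, ← neg_pow]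
    rw [Finset.sum_congr rfl step]
    rw [← Finset.Ico_add_one_right_eq_Icc, Finset.sum_Ico_eq_sum_range]
    simp
  rw [h1]
  have := geom_sum_mul (-X : ℂ[X]) m
  linear_combination (-1 : ℂ[X]) * this

lemma deriv_Gpoly (s : ℕ) :
    derivative (Gpoly (s + 1)) =
      (Gpoly (s + 1) - C ((s.factorial : ℂ)⁻¹) * (Lpoly (s + 1)) ^ s)
        * derivative (Lpoly (s + 1)) := by
  set L := Lpoly (s + 1) with hL
  have hterm : ∀ j : ℕ, derivative (C (((j+1).factorial : ℂ)⁻¹) * L ^ (j+1))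
      = C ((j.factorial : ℂ)⁻¹) * L ^ j * derivative L := by
    intro j
    rw [derivative_C_mul, derivative_pow]
    rw [← mul_assoc, ← mul_assoc, ← map_mul]
    have hfac : (((j+1).factorial : ℂ))⁻¹ * (((j+1) : ℕ) : ℂ) = ((j.factorial : ℂ))⁻¹ := by
      have h1 : ((j+1 : ℕ) : ℂ) ≠ 0 := Nat.cast_ne_zero.mpr (by omega)
      have h2 : ((j.factorial : ℕ) : ℂ) ≠ 0 := Nat.cast_ne_zero.mpr j.factorial_ne_zero
      rw [Nat.factorial_succ]
      push_cast
      field_simp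
    rw [hfac]
    simp [Nat.add_sub_cancel]
  have hsplit : Gpoly (s + 1)
      = (∑ j ∈ Finset.range s, C ((j.factorial : ℂ)⁻¹) * L ^ j)
        + C ((s.factorial : ℂ)⁻¹) * L ^ s := by
    unfold Gpoly
    rw [Finset.sum_range_succ]
  unfold Gpoly
  rw [derivative_sum, Finset.sum_range_succ']
  have h0 : derivative (C (((0:ℕ).factorial : ℂ)⁻¹) * L ^ 0) = 0 := by
    simp
  rw [h0, add_zero]
  calc ∑ j ∈ Finset.range s, derivative (C (((j+1).factorial : ℂ)⁻¹) * L ^ (j+1))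
      = ∑ j ∈ Finset.range s, C ((j.factorial : ℂ)⁻¹) * L ^ j * derivative L := by
        exact Finset.sum_congr rfl (fun j _ => hterm j)
    _ = (∑ j ∈ Finset.range s, C ((j.factorial : ℂ)⁻¹) * L ^ j) * derivative L := by
        rw [Finset.sum_mul]
    _ = ((∑ n ∈ Finset.range (s+1), C ((n.factorial : ℂ)⁻¹) * L ^ n)
          - C ((s.factorial : ℂ)⁻¹) * L ^ s) * derivative L := by
        rw [Finset.sum_range_succ]
        ring

lemma key_dvd (s : ℕ) :
    (X : ℂ[X]) ^ s ∣ (1 + X) * derivative (Gpoly (s + 1)) - Gpoly (s + 1) := by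
  set L := Lpoly (s + 1) with hL
  set G := Gpoly (s + 1) with hG
  set c := C ((s.factorial : ℂ)⁻¹) with hc
  have h1 : (1 + X) * derivative G = (G - c * L ^ s) * ((1 + X) * derivative L) := by
    rw [deriv_Gpoly]; ring
  rw [h1, deriv_Lpoly]
  have expand : (G - c * L ^ s) * (1 - (-X) ^ (s+1)) - G
      = -(c * L ^ s) - (G - c * L ^ s) * (-X) ^ (s+1) := by ring
  rw [expand]
  apply dvd_sub
  · rw [dvd_neg]
    exact Dvd.dvd.mul_left (pow_dvd_pow_of_dvd (X_dvd_Lpoly _) s) _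
  · apply Dvd.dvd.mul_left
    rw [neg_pow]
    exact Dvd.dvd.mul_left (pow_dvd_pow X (by omega)) _

lemma coeff_G0 (s : ℕ) : (Gpoly (s + 1)).coeff 0 = 1 := by
  unfold Gpoly
  rw [finset_sum_coeff, Finset.sum_eq_single 0]
  · simp
  · intro n _ hn
    rw [coeff_C_mul]
    have : (Lpoly (s+1) ^ n).coeff 0 = 0 :=
      X_dvd_iff.mp (dvd_pow (X_dvd_Lpoly _) hn)
    rw [this, mul_zero]
  · intro h
    simp at h

lemma coeff_delta (s : ℕ) : ∀ n, n ≤ s → (Gpoly (s + 1) - (1 + X)).coeff n = 0 := by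
  intro n
  induction n using Nat.strong_induction_on with
  | _ n ih =>
    match n with
    | 0 =>
      intro _
      rw [coeff_sub, coeff_G0]
      simp
    | Nat.succ k =>
      intro hks
      set δ := Gpoly (s + 1) - (1 + X) with hδ
      have hdvd : (X : ℂ[X]) ^ s ∣ (1 + X) * derivative δ - δ := by
        have heq : (1 + X) * derivative δ - δ
            = (1 + X) * derivative (Gpoly (s + 1)) - Gpoly (s + 1) := by
          rw [hδ, derivative_sub, derivative_add, derivative_one, derivative_X]
          ring
        rw [heq]
        exact key_dvd s
      have hco : ((1 + X) * derivative δ - δ).coeff k = 0 :=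
        X_pow_dvd_iff.mp hdvd k (by omega)
      have hsplit : (1 + X) * derivative δ = derivative δ + X * derivative δ := by ring
      rw [coeff_sub, hsplit, coeff_add] at hco
      have hδk : δ.coeff k = 0 := ih k (by omega) (by omega)
      have hXd : (X * derivative δ).coeff k = 0 := by
        match k with
        | 0 => rw [mul_coeff_zero]; simp
        | Nat.succ j =>
          rw [coeff_X_mul, coeff_derivative]
          rw [ih (j+1) (by omega) (by omega), zero_mul]
      rw [hδk, hXd, coeff_derivative] at hco
      have : δ.coeff (k + 1) * ((k : ℂ) + 1) = 0 := by
        push_cast at hco ⊢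
        linear_combination hco
      rcases mul_eq_zero.mp this with h | h
      · exact h
      · exact absurd h (Nat.cast_add_one_ne_zero k)

lemma aeval_Lpoly {ν : ℕ} (N : Matrix (Fin ν) (Fin ν) ℂ) (m : ℕ) :
    aeval N (Lpoly m) = ∑ k ∈ Finset.Icc 1 m, ((-1 : ℂ) ^ (k + 1) / k) • N ^ k := by
  unfold Lpoly
  rw [map_sum]
  apply Finset.sum_congr rfl
  intro k _
  rw [map_mul, aeval_C, map_pow, aeval_X, ← Algebra.smul_def]

lemma aeval_L_pow_nilp {ν : ℕ} (N : Matrix (Fin ν) (Fin ν) ℂ) (hN : N ^ ν = 0) (m : ℕ) :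
    (aeval N (Lpoly m)) ^ ν = 0 := by
  obtain ⟨L2, hL2⟩ := X_dvd_Lpoly m
  rw [hL2, map_mul, aeval_X]
  have hcomm : Commute N (aeval N L2) := by
    have := (Commute.all (X : ℂ[X]) L2).map (aeval N).toRingHom
    simpa using this
  rw [hcomm.mul_pow, hN, zero_mul]

lemma exp_log_eq {ν : ℕ} (hν : 0 < ν) (N : Matrix (Fin ν) (Fin ν) ℂ) (hN : N ^ ν = 0) :
    NormedSpace.exp (aeval N (Lpoly ν)) = 1 + N := by
  obtain ⟨s, rfl⟩ : ∃ s, ν = s + 1 := ⟨ν - 1, by omega⟩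
  rw [exp_nilpotent_eq_sum _ (aeval_L_pow_nilp N hN (s+1))]
  have hG : ∑ k ∈ Finset.range (s+1), ((k.factorial : ℂ)⁻¹) • (aeval N (Lpoly (s+1))) ^ k
      = aeval N (Gpoly (s+1)) := by
    unfold Gpoly
    rw [map_sum]
    apply Finset.sum_congr rfl
    intro n _
    rw [map_mul, aeval_C, map_pow, ← Algebra.smul_def]
  rw [hG]
  have hdvd : (X : ℂ[X]) ^ (s+1) ∣ (Gpoly (s+1) - (1 + X)) :=
    X_pow_dvd_iff.mpr (fun d hd => coeff_delta s d (by omega))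
  obtain ⟨R, hR⟩ := hdvd
  have hGeq : Gpoly (s+1) = (1 + X) + X ^ (s+1) * R := by
    rw [← hR]; ring
  rw [hGeq, map_add, map_add, map_mul, map_pow, aeval_X, aeval_one, hN, zero_mul, add_zero]

/-- For `|q| > 1` and `B = P(DU)P⁻¹ ∈ GL_ν(ℂ)` in Jordan normal form
(`D = Diag(dᵢ)` invertible diagonal, `U` unipotent upper triangular, `DU = UD`), the
matrix `Λ_{q,B}(z) = P·(Diag(Λ_{q,dᵢ}(z))·exp(log(U)·l_q(z)))·P⁻¹` satisfies
`Λ_{q,B}(qz) = B·Λ_{q,B}(z) = Λ_{q,B}(z)·B` wherever everything is defined. -/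
theorem stmt10 (q : ℂ) (hq : 1 < ‖q‖) (ν : ℕ) (hν : 0 < ν)
    (B P D U : Matrix (Fin ν) (Fin ν) ℂ) (d : Fin ν → ℂ)
    (hB : IsUnit B.det) (hP : IsUnit P.det) (hd : ∀ i, d i ≠ 0)
    (hD : D = Matrix.diagonal d)
    (hUtri : ∀ i j : Fin ν, j < i → U i j = 0)
    (hUdiag : ∀ i, U i i = 1)
    (hDU : D * U = U * D)
    (hBdec : B = P * (D * U) * P⁻¹)
    (logU : Matrix (Fin ν) (Fin ν) ℂ)
    (hlogU : logU = ∑ k ∈ Finset.Icc 1 ν, ((-1 : ℂ) ^ (k + 1) / k) • (U - 1) ^ k)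
    (Λ : ℂ → Matrix (Fin ν) (Fin ν) ℂ)
    (hΛ : ∀ z : ℂ, Λ z = P * (Matrix.diagonal (fun i => lam q (d i) z) *
      NormedSpace.exp (lq q z • logU)) * P⁻¹)
    (z : ℂ) (hz : z ≠ 0)
    (hθ : theta q z ≠ 0) (hθq : theta q (q * z) ≠ 0)
    (hi : ∀ i, theta q (z / d i) ≠ 0) (hiq : ∀ i, theta q (q * z / d i) ≠ 0) :
    Λ (q * z) = B * Λ z ∧ B * Λ z = Λ z * B := by
  have hq0 : q ≠ 0 := by
    intro h
    rw [h] at hq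
    simp at hq
    linarith
  have hNtri : ∀ i j : Fin ν, (j : ℕ) ≤ (i : ℕ) → (U - 1) i j = 0 := by
    intro i j hji
    by_cases hij : i = j
    · subst hij
      simp [Matrix.sub_apply, hUdiag i]
    · have hij' : (j : ℕ) ≠ (i : ℕ) := fun h => hij ((Fin.ext h).symm)
      have hlt : j < i := by
        rw [Fin.lt_def]
        omega
      simp [Matrix.sub_apply, hUtri i j hlt, Matrix.one_apply_ne hij]
  have hNν : (U - 1) ^ ν = 0 := strict_tri_pow (U - 1) hNtri
  have hlogU' : logU = Polynomial.aeval (U - 1) (Lpoly ν) := by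
    rw [aeval_Lpoly, hlogU]
  have hexplog : NormedSpace.exp logU = U := by
    rw [hlogU', exp_log_eq hν (U - 1) hNν]
    abel
  have hdd : ∀ i j, U i j ≠ 0 → d i = d j := by
    intro i j hUij
    have h1 := congr_fun (congr_fun hDU i) j
    rw [hD] at h1
    rw [Matrix.diagonal_mul, Matrix.mul_diagonal] at h1
    exact mul_right_cancel₀ hUij (by linear_combination h1)
  have hdiagU : ∀ f : ℂ → ℂ,
      Matrix.diagonal (fun i => f (d i)) * U = U * Matrix.diagonal (fun i => f (d i)) := by
    intro f
    ext i j
    rw [Matrix.diagonal_mul, Matrix.mul_diagonal]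
    by_cases h : U i j = 0
    · rw [h, mul_zero, zero_mul]
    · rw [hdd i j h, mul_comm]
  have hcomm_logU : ∀ M : Matrix (Fin ν) (Fin ν) ℂ, Commute M U → Commute M logU := by
    intro M h
    rw [hlogU]
    apply Commute.sum_right
    intro k _
    exact ((h.sub_right (Commute.one_right M)).pow_right k).smul_right _
  set a : Fin ν → ℂ := fun i => lam q (d i) z with ha
  set A := Matrix.diagonal a with hA
  set E := NormedSpace.exp (lq q z • logU) with hE
  have hAU : Commute A U := hdiagU (fun c => lam q c z)
  have hDU' : Commute D U := hDU
  have hAD : Commute A D := by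
    show A * D = D * A
    rw [hA, hD, Matrix.diagonal_mul_diagonal, Matrix.diagonal_mul_diagonal]
    exact congrArg Matrix.diagonal (funext fun i => mul_comm (a i) (d i))
  have hUE : Commute U E := ((hcomm_logU U (Commute.refl U)).smul_right (lq q z)).exp_right
  have hDE : Commute D E := ((hcomm_logU D hDU').smul_right (lq q z)).exp_right
  have hAE : Commute A E := ((hcomm_logU A hAU).smul_right (lq q z)).exp_right
  have hlam : (fun i => lam q (d i) (q * z)) = fun i => d i * lam q (d i) z := by
    funext i
    exact lam_shift q (d i) z hq0 (hd i) hz (hi i)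
  have hlq2 : lq q (q * z) = lq q z + 1 := lq_shift q z hq hz hθ
  have hexp_split : NormedSpace.exp (lq q (q * z) • logU) = U * E := by
    rw [hlq2, add_smul, one_smul, add_comm,
      Matrix.exp_add_of_commute logU (lq q z • logU) ((Commute.refl logU).smul_right _),
      hexplog, hE]
  have hPinv : P⁻¹ * P = 1 := Matrix.nonsing_inv_mul P hP
  have conj_mul : ∀ X Y : Matrix (Fin ν) (Fin ν) ℂ,
      (P * X * P⁻¹) * (P * Y * P⁻¹) = P * (X * Y) * P⁻¹ := by
    intro X Y
    calc (P * X * P⁻¹) * (P * Y * P⁻¹) = P * (X * ((P⁻¹ * P) * (Y * P⁻¹))) := by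
          simp only [Matrix.mul_assoc]
      _ = P * (X * Y) * P⁻¹ := by
          rw [hPinv, Matrix.one_mul]
          simp only [Matrix.mul_assoc]
  have hΛz : Λ z = P * (A * E) * P⁻¹ := hΛ z
  have hdiagDA : Matrix.diagonal (fun i => d i * lam q (d i) z) = D * A := by
    rw [hD, hA, Matrix.diagonal_mul_diagonal]
  have hΛqz : Λ (q * z) = P * ((D * A) * (U * E)) * P⁻¹ := by
    rw [hΛ, hlam, hexp_split, hdiagDA]
  constructor
  · rw [hΛqz, hBdec, hΛz, conj_mul]
    have middle : (D * A) * (U * E) = (D * U) * (A * E) := by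
      simp only [Matrix.mul_assoc]
      congr 1
      rw [← Matrix.mul_assoc, hAU.eq, Matrix.mul_assoc]
    rw [middle]
  · rw [hBdec, hΛz, conj_mul, conj_mul]
    have comm : Commute (A * E) (D * U) :=
      Commute.mul_left (hAD.mul_right hAU) ((hDE.symm).mul_right (hUE.symm))
    rw [comm.eq]
end
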